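/- arXiv:1506.02341 — 10 statements merged into one kernel-verified Lean document; each statement's English description precedes it below -/
import Mathlib

section
/- Let T>0 and let n≥2 be an integer, τ=T/n, t_k=kτ for k=0,…,n. Let s∈W²₂[0,T] with second derivative s''. Then ∑_{k=1}^{n-1} τ·((s(t_{k+1})−2s(t_k)+s(t_{k-1}))/τ²)² ≤ ∫₀ᵀ s''(t)² dt. -/
/-!
Peano kernel argument. With `t_k = kτ` and `φ_k = tent τ t_k` the hat function centred at `t_k`,
`s(t_{k+1}) - 2 s(t_k) + s(t_{k-1}) = ∫_{t_{k-1}}^{t_k} ∫_v^{v+τ} s''(w) dw dv = ∫ φ_k s''`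
by Fubini, because `φ_k(w)` is the length of `{v ∈ [t_{k-1}, t_k] | v ≤ w ≤ v + τ}`.
Since `∫ φ_k = τ²`, Cauchy–Schwarz gives `τ ((Δ²s)_k / τ²)² ≤ τ⁻¹ ∫ φ_k s''²`,
and the hats sum to at most `τ` pointwise.
-/

open MeasureTheory Set

noncomputable def tent (τ m t : ℝ) : ℝ := max 0 (τ - |t - m|)

lemma tent_eq_zero {τ m t : ℝ} (h : τ ≤ |t - m|) : tent τ m t = 0 :=
  max_eq_left (by linarith)

lemma tent_nonneg (τ m t : ℝ) : 0 ≤ tent τ m t := le_max_left _ _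

lemma continuous_tent (τ m : ℝ) : Continuous (tent τ m) := by
  unfold tent; fun_prop

lemma volume_real_Icc_inter_Icc_eq_tent (τ m w : ℝ) :
    volume.real (Icc (m - τ) m ∩ Icc (w - τ) w) = tent τ m w := by
  rw [Icc_inter_Icc, Real.volume_real_Icc, max_comm, tent, ← abs_sub_comm m w,
    ← max_sub_min_eq_abs', max_sub_sub_right]
  congr 1
  ring

lemma intervalIntegral_eq_setIntegral_Icc {f : ℝ → ℝ} {a b : ℝ} (hab : a ≤ b) :
    ∫ x in a..b, f x = ∫ x in Icc a b, f x := by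
  rw [intervalIntegral.integral_of_le hab, integral_Icc_eq_integral_Ioc]

lemma integral_integral_shift_eq_integral_tent {f : ℝ → ℝ} {τ m : ℝ} (hτ : 0 ≤ τ)
    (hf : IntegrableOn f (Icc (m - τ) (m + τ))) :
    ∫ v in (m - τ)..m, ∫ w in v..(v + τ), f w = ∫ w in (m - τ)..(m + τ), tent τ m w * f w := by
  set S := {p : ℝ × ℝ | p.1 ≤ p.2 ∧ p.2 ≤ p.1 + τ}
  have hS : MeasurableSet S := by measurability
  have hint : Integrable (S.indicator fun p => f p.2)
      ((volume.restrict (Icc (m - τ) m)).prod (volume.restrict (Icc (m - τ) (m + τ)))) :=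
    (hf.comp_snd _).indicator hS
  have hswap := integral_integral_swap (f := fun v w => S.indicator (fun p => f p.2) (v, w)) hint
  have hS_fst (v w : ℝ) : S.indicator (fun p => f p.2) (v, w) = (Icc v (v + τ)).indicator f w := by
    simp only [indicator, S, mem_ofPred_eq, mem_Icc]
  have hS_snd (v w : ℝ) :
      S.indicator (fun p => f p.2) (v, w) = (Icc (w - τ) w).indicator (fun _ => f w) v := by
    simp only [indicator, S, mem_ofPred_eq, mem_Icc]
    congr 1
    exact propext ⟨fun h => ⟨by linarith, h.1⟩, fun h => ⟨h.2, by linarith⟩⟩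
  rw [intervalIntegral_eq_setIntegral_Icc (by linarith),
    intervalIntegral_eq_setIntegral_Icc (by linarith)]
  convert hswap using 1
  · refine setIntegral_congr_fun measurableSet_Icc fun v hv => ?_
    simp only [hS_fst, setIntegral_indicator measurableSet_Icc]
    rw [inter_eq_right.2 (Icc_subset_Icc (by linarith [hv.1]) (by linarith [hv.2])),
      intervalIntegral_eq_setIntegral_Icc (by linarith)]
  · refine integral_congr_ae (ae_of_all _ fun w => ?_)
    simp only [hS_snd, setIntegral_indicator measurableSet_Icc, setIntegral_const,
      volume_real_Icc_inter_Icc_eq_tent, smul_eq_mul]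

lemma integral_tent {τ : ℝ} (m : ℝ) (hτ : 0 ≤ τ) : ∫ w in (m - τ)..(m + τ), tent τ m w = τ ^ 2 := by
  have h := integral_integral_shift_eq_integral_tent (f := fun _ => (1 : ℝ)) (m := m) hτ
    (integrableOn_const (by simp))
  simp only [mul_one, intervalIntegral.integral_const, smul_eq_mul, add_sub_cancel_left,
    sub_sub_cancel] at h
  rw [← h, sq]

lemma integral_tent_mul_eq {g : ℝ → ℝ} {a b τ m : ℝ} (hτ : 0 ≤ τ) (ha : a ≤ m - τ)
    (hb : m + τ ≤ b) :
    ∫ w in (m - τ)..(m + τ), tent τ m w * g w = ∫ w in a..b, tent τ m w * g w := by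
  rw [intervalIntegral.integral_of_le (by linarith), intervalIntegral.integral_of_le (by linarith)]
  refine (setIntegral_eq_of_subset_of_forall_sdiff_eq_zero measurableSet_Ioc
    (Ioc_subset_Ioc ha hb) fun w hw => ?_).symm
  have hw' : w ≤ m - τ ∨ m + τ < w := by
    simpa only [mem_Ioc, not_and_or, not_lt, not_le] using hw.2
  rw [tent_eq_zero, zero_mul]
  exact le_abs'.2 (by rcases hw' with h | h <;> [left; right] <;> linarith)

lemma sum_tent_le {τ t : ℝ} (hτ : 0 < τ) (ht : 0 ≤ t) (K : Finset ℕ) :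
    ∑ k ∈ K, tent τ (k * τ) t ≤ τ := by
  set j := ⌊t / τ⌋₊
  have hj : j * τ ≤ t := (le_div_iff₀ hτ).1 (Nat.floor_le (div_nonneg ht hτ.le))
  have hj' : t < (j + 1) * τ := (div_lt_iff₀ hτ).1 (Nat.lt_floor_add_one _)
  have hzero : ∀ k ∉ ({j, j + 1} : Finset ℕ), tent τ (k * τ) t = 0 := by
    intro k hk
    simp only [Finset.mem_insert, Finset.mem_singleton, not_or] at hk
    apply tent_eq_zero
    rcases lt_or_gt_of_ne hk.1 with h | h
    · have : (k : ℝ) + 1 ≤ j := by exact_mod_cast h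
      rw [abs_of_nonneg (by nlinarith)]
      nlinarith
    · have : (j : ℝ) + 2 ≤ k := by exact_mod_cast (by omega : j + 2 ≤ k)
      rw [abs_of_nonpos (by nlinarith)]
      nlinarith
  calc ∑ k ∈ K, tent τ (k * τ) t ≤ ∑ k ∈ K ∪ {j, j + 1}, tent τ (k * τ) t :=
        Finset.sum_le_sum_of_subset_of_nonneg Finset.subset_union_left
          fun k _ _ => tent_nonneg _ _ _
    _ = ∑ k ∈ ({j, j + 1} : Finset ℕ), tent τ (k * τ) t :=
        (Finset.sum_subset Finset.subset_union_right fun k _ hk => hzero k hk).symm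
    _ = τ := by
        rw [Finset.sum_pair (by omega), tent, tent, abs_of_nonneg (by linarith),
          abs_of_nonpos (by push_cast; linarith), max_eq_right (by linarith),
          max_eq_right (by push_cast; linarith)]
        push_cast
        ring

lemma sq_intervalIntegral_mul_le {w f : ℝ → ℝ} {a b : ℝ} (hab : a ≤ b)
    (hw : ContinuousOn w (uIcc a b)) (hw0 : ∀ t ∈ Icc a b, 0 ≤ w t)
    (hf : IntervalIntegrable f volume a b)
    (hf2 : IntervalIntegrable (fun t => f t ^ 2) volume a b) :
    (∫ t in a..b, w t * f t) ^ 2 ≤ (∫ t in a..b, w t) * ∫ t in a..b, w t * f t ^ 2 := by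
  have iwf : IntervalIntegrable (fun t => w t * f t) volume a b := hf.continuousOn_mul hw
  have iwf2 : IntervalIntegrable (fun t => w t * f t ^ 2) volume a b := hf2.continuousOn_mul hw
  have iw : IntervalIntegrable w volume a b := hw.intervalIntegrable
  -- the quadratic `x ↦ ∫ w (x f - 1)²` is nonnegative, so its discriminant is nonpositive
  have hquad : ∀ x : ℝ, 0 ≤ (∫ t in a..b, w t * f t ^ 2) * (x * x)
      + (-2 * ∫ t in a..b, w t * f t) * x + ∫ t in a..b, w t := fun x => by
    calc 0 ≤ ∫ t in a..b, w t * (x * f t - 1) ^ 2 :=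
          intervalIntegral.integral_nonneg hab fun t ht => mul_nonneg (hw0 t ht) (sq_nonneg _)
      _ = ∫ t in a..b, ((x * x) * (w t * f t ^ 2) + ((-2 * x) * (w t * f t) + w t)) :=
          intervalIntegral.integral_congr fun t _ => by ring
      _ = _ := by
          rw [intervalIntegral.integral_add (iwf2.const_mul _) ((iwf.const_mul _).add iw),
            intervalIntegral.integral_add (iwf.const_mul _) iw,
            intervalIntegral.integral_const_mul, intervalIntegral.integral_const_mul]
          ring
  have := discrim_le_zero hquad
  rw [discrim] at this
  linarith

section SecondDerivative

variable {a b : ℝ} {s s' s'' : ℝ → ℝ}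
  (hs : ∀ t ∈ Icc a b, HasDerivWithinAt s (s' t) (Icc a b) t)
  (hs'' : IntervalIntegrable s'' volume a b)
  (hftc : ∀ x y, a ≤ x → x ≤ y → y ≤ b → s' y - s' x = ∫ t in x..y, s'' t)

include hs'' hftc in
lemma continuousOn_of_sub_eq_integral : ContinuousOn s' (Icc a b) := by
  have hprim := (intervalIntegral.continuousOn_primitive_interval' hs'' left_mem_uIcc).mono
    Icc_subset_uIcc
  refine (continuousOn_const (c := s' a)).add hprim |>.congr fun x hx => ?_
  show s' x = s' a + ∫ t in a..x, s'' t
  linarith [hftc a x le_rfl hx.1 hx.2]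

include hs hs'' hftc in
lemma sub_eq_integral_of_hasDerivWithinAt {x y : ℝ} (hax : a ≤ x) (hxy : x ≤ y) (hyb : y ≤ b) :
    s y - s x = ∫ t in x..y, s' t := by
  have hsub : Icc x y ⊆ Icc a b := Icc_subset_Icc hax hyb
  have hs' := (continuousOn_of_sub_eq_integral hs'' hftc).mono hsub
  refine (intervalIntegral.integral_eq_sub_of_hasDerivAt_of_le hxy
    (fun t ht => ((hs t (hsub ht)).continuousWithinAt).mono hsub) (fun t ht => ?_)
    (hs'.intervalIntegrable_of_Icc hxy)).symm
  exact (hs t (hsub (Ioo_subset_Icc_self ht))).hasDerivAt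
    (Icc_mem_nhds (by linarith [ht.1]) (by linarith [ht.2]))

include hs hs'' hftc in
lemma second_difference_eq_integral_tent {m τ : ℝ} (hτ : 0 ≤ τ) (ha : a ≤ m - τ)
    (hb : m + τ ≤ b) :
    s (m + τ) - 2 * s m + s (m - τ) = ∫ w in (m - τ)..(m + τ), tent τ m w * s'' w := by
  have hs' := continuousOn_of_sub_eq_integral hs'' hftc
  have h_right : s (m + τ) - s m = ∫ v in (m - τ)..m, s' (v + τ) := by
    rw [intervalIntegral.integral_comp_add_right, sub_add_cancel]
    exact sub_eq_integral_of_hasDerivWithinAt hs hs'' hftc (by linarith) (by linarith) hb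
  have h_left : s m - s (m - τ) = ∫ v in (m - τ)..m, s' v :=
    sub_eq_integral_of_hasDerivWithinAt hs hs'' hftc ha (by linarith) (by linarith)
  have h_diff : ∀ v ∈ uIcc (m - τ) m, s' (v + τ) - s' v = ∫ w in v..(v + τ), s'' w := by
    intro v hv
    rw [uIcc_of_le (by linarith)] at hv
    exact hftc v (v + τ) (by linarith [hv.1]) (by linarith) (by linarith [hv.2])
  rw [← integral_integral_shift_eq_integral_tent hτ, ← intervalIntegral.integral_congr h_diff,
    intervalIntegral.integral_sub, ← h_right, ← h_left]
  · ring
  · exact ContinuousOn.intervalIntegrable_of_Icc (by linarith) <| hs'.comp (by fun_prop)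
      fun v hv => ⟨by linarith [hv.1], by linarith [hv.2]⟩
  · exact (hs'.mono (Icc_subset_Icc ha (by linarith))).intervalIntegrable_of_Icc (by linarith)
  · rw [integrableOn_Icc_iff_integrableOn_Ioc]
    exact hs''.1.mono_set (Ioc_subset_Ioc ha hb)

include hs hs'' hftc in
lemma sq_second_difference_le (hs''sq : IntervalIntegrable (fun t => s'' t ^ 2) volume a b)
    {m τ : ℝ} (hτ : 0 ≤ τ) (ha : a ≤ m - τ) (hb : m + τ ≤ b) :
    (s (m + τ) - 2 * s m + s (m - τ)) ^ 2 ≤ τ ^ 2 * ∫ w in a..b, tent τ m w * s'' w ^ 2 := by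
  have hsub : uIcc (m - τ) (m + τ) ⊆ uIcc a b :=
    uIcc_subset_uIcc (mem_uIcc.2 (.inl ⟨ha, by linarith⟩)) (mem_uIcc.2 (.inl ⟨by linarith, hb⟩))
  rw [second_difference_eq_integral_tent hs hs'' hftc hτ ha hb, ← integral_tent m hτ,
    ← integral_tent_mul_eq hτ ha hb]
  exact sq_intervalIntegral_mul_le (by linarith) (continuous_tent τ m).continuousOn
    (fun t _ => tent_nonneg τ m t) (hs''.mono_set hsub) (hs''sq.mono_set hsub)

end SecondDerivative

lemma sum_integral_tent_mul_le {g : ℝ → ℝ} {τ b : ℝ} (hτ : 0 < τ) (hb : 0 ≤ b)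
    (hg : IntervalIntegrable g volume 0 b) (hg0 : ∀ t, 0 ≤ g t) (K : Finset ℕ) :
    ∑ k ∈ K, ∫ t in (0 : ℝ)..b, tent τ (k * τ) t * g t ≤ τ * ∫ t in (0 : ℝ)..b, g t := by
  have hint (k : ℕ) : IntervalIntegrable (fun t => tent τ (k * τ) t * g t) volume 0 b :=
    hg.continuousOn_mul (continuous_tent _ _).continuousOn
  rw [← intervalIntegral.integral_finsetSum fun k _ => hint k,
    ← intervalIntegral.integral_const_mul]
  have hsum : IntervalIntegrable (fun t => ∑ k ∈ K, tent τ (k * τ) t * g t) volume 0 b := by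
    simpa only [← Finset.sum_fn] using IntervalIntegrable.sum K fun k _ => hint k
  refine intervalIntegral.integral_mono_on hb hsum (hg.const_mul τ) fun t ht => ?_
  rw [← Finset.sum_mul]
  exact mul_le_mul_of_nonneg_right (sum_tent_le hτ ht.1 K) (hg0 t)

/-- the discrete second-difference quotients of `s` on the uniform grid
are bounded in the discrete `L²` norm by the `L²` norm of `s''` (inequality (2.9)). -/
theorem stmt_0 (T : ℝ) (hT : 0 < T) (n : ℕ) (hn : 2 ≤ n) (τ : ℝ) (hτ : τ = T / n)
    (s s' s'' : ℝ → ℝ)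
    (hs : ∀ t ∈ Set.Icc (0:ℝ) T, HasDerivWithinAt s (s' t) (Set.Icc (0:ℝ) T) t)
    (hs''int : IntervalIntegrable s'' volume 0 T)
    (hs''sq : IntervalIntegrable (fun t => (s'' t)^2) volume 0 T)
    (hftc : ∀ a b : ℝ, 0 ≤ a → a ≤ b → b ≤ T → s' b - s' a = ∫ t in a..b, s'' t) :
    ∑ k ∈ Finset.Icc 1 (n-1),
        τ * ((s (((k:ℝ)+1)*τ) - 2 * s ((k:ℝ)*τ) + s (((k:ℝ)-1)*τ)) / τ^2)^2
      ≤ ∫ t in (0:ℝ)..T, (s'' t)^2 := by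
  have hτ_pos : 0 < τ := by
    rw [hτ]
    exact div_pos hT (by exact_mod_cast (by omega : 0 < n))
  have hTn : T = n * τ := by rw [hτ]; field_simp
  have hnode : ∀ k ∈ Finset.Icc 1 (n - 1),
      τ * ((s (((k:ℝ)+1)*τ) - 2 * s ((k:ℝ)*τ) + s (((k:ℝ)-1)*τ)) / τ^2)^2
        ≤ τ⁻¹ * ∫ t in (0:ℝ)..T, tent τ (k * τ) t * s'' t ^ 2 := by
    intro k hk
    obtain ⟨hk1, hkn⟩ := Finset.mem_Icc.1 hk
    replace hk1 : (1 : ℝ) ≤ k := by exact_mod_cast hk1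
    replace hkn : (k : ℝ) + 1 ≤ n := by exact_mod_cast (by omega : k + 1 ≤ n)
    have h := sq_second_difference_le hs hs''int hftc hs''sq (m := k * τ) hτ_pos.le
      (by nlinarith) (by rw [hTn]; nlinarith)
    rw [show ((k : ℝ) + 1) * τ = k * τ + τ by ring, show ((k : ℝ) - 1) * τ = k * τ - τ by ring,
      div_pow, ← le_div_iff₀' hτ_pos]
    refine (div_le_div_of_nonneg_right h (by positivity)).trans_eq ?_
    field_simp
  calc _ ≤ ∑ k ∈ Finset.Icc 1 (n - 1), τ⁻¹ * ∫ t in (0:ℝ)..T, tent τ (k * τ) t * s'' t ^ 2 :=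
        Finset.sum_le_sum hnode
    _ ≤ τ⁻¹ * (τ * ∫ t in (0:ℝ)..T, s'' t ^ 2) := by
        rw [← Finset.mul_sum]
        gcongr
        exact sum_integral_tent_mul_le hτ_pos hT.le hs''sq (fun t => sq_nonneg _) _
    _ = ∫ t in (0:ℝ)..T, s'' t ^ 2 := inv_mul_cancel_left₀ hτ_pos.ne' _
end

section
/- Let T>0 and let n≥1 be an integer, τ=T/n, t_k=kτ for k=0,…,n. Let s:ℝ→ℝ be absolutely continuous on [0,T] with square-integrable derivative s'. Then |∑_{k=0}^{n-1} τ·s(t_k)² − ∫₀ᵀ s(t)² dt| ≤ τ·∫₀ᵀ (s(t)² + s'(t)²) dt. -/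
/-! On a cell `[t, t + τ]` the product rule for absolutely continuous functions gives
`s(x)² - s(t)² = ∫ 2 s s'`, and `|2 s s'| ≤ s² + s'²`; so `s(t)²` and `s(x)²` differ by at most
the cell's `∫ (s² + s'²)`. Integrating over the cell and summing over the cells gives the bound. -/

open MeasureTheory Filter Set

theorem AbsolutelyContinuousOnInterval.congr {X : Type*} [PseudoMetricSpace X] {f g : ℝ → X}
    {a b : ℝ} (hf : AbsolutelyContinuousOnInterval f a b) (hfg : EqOn f g (uIcc a b)) :
    AbsolutelyContinuousOnInterval g a b := by
  refine hf.congr' ?_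
  filter_upwards [mem_inf_of_right (mem_principal_self _)] with E hE
  exact Finset.sum_congr rfl fun i hi => by rw [hfg (hE.1 i hi).1, hfg (hE.1 i hi).2]

section Primitive

variable {f f' : ℝ → ℝ} {a b : ℝ}

theorem absolutelyContinuousOnInterval_of_sub_eq_integral
    (hf' : IntervalIntegrable f' volume a b)
    (hf : ∀ x ∈ uIcc a b, f x - f a = ∫ t in a..x, f' t) :
    AbsolutelyContinuousOnInterval f a b :=
  ((LipschitzWith.const (f a)).lipschitzOnWith.absolutelyContinuousOnInterval.fun_add
    (hf'.absolutelyContinuousOnInterval_intervalIntegral left_mem_uIcc)).congr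
    fun x hx => by simp only [← hf x hx, add_sub_cancel]

theorem ae_hasDerivAt_of_sub_eq_integral (hf' : IntervalIntegrable f' volume a b)
    (hf : ∀ x ∈ uIcc a b, f x - f a = ∫ t in a..x, f' t) :
    ∀ᵐ x, x ∈ uIoc a b → HasDerivAt f (f' x) x := by
  have hne : ∀ᵐ x, x ≠ max a b := by simp [ae_iff, measure_singleton]
  filter_upwards [hf'.ae_hasDerivAt_integral, hne] with x hx hxne hxab
  have hxo : x ∈ Ioo (min a b) (max a b) := ⟨hxab.1, lt_of_le_of_ne hxab.2 hxne⟩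
  refine ((hx (Ioo_subset_Icc_self hxo) a left_mem_uIcc).const_add (f a)).congr_of_eventuallyEq ?_
  filter_upwards [Ioo_mem_nhds hxo.1 hxo.2] with y hy
  rw [← hf y (Ioo_subset_Icc_self hy), add_sub_cancel]

theorem sq_sub_sq_eq_integral (hf' : IntervalIntegrable f' volume a b)
    (hf : ∀ x ∈ uIcc a b, f x - f a = ∫ t in a..x, f' t) :
    f b ^ 2 - f a ^ 2 = ∫ t in a..b, 2 * f t * f' t := by
  have hac := absolutelyContinuousOnInterval_of_sub_eq_integral hf' hf
  rw [sq, sq, ← hac.integral_deriv_mul_eq_sub hac]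
  refine intervalIntegral.integral_congr_ae ?_
  filter_upwards [ae_hasDerivAt_of_sub_eq_integral hf' hf] with x hx hxab
  rw [(hx hxab).deriv]
  ring

theorem abs_sq_sub_sq_le_integral (hf' : IntervalIntegrable f' volume a b)
    (hf'sq : IntervalIntegrable (fun t => f' t ^ 2) volume a b)
    (hf : ∀ x ∈ uIcc a b, f x - f a = ∫ t in a..x, f' t) {x : ℝ} (hx : x ∈ Icc a b) :
    |f x ^ 2 - f a ^ 2| ≤ ∫ t in a..b, (f t ^ 2 + f' t ^ 2) := by
  have hsub : uIcc a x ⊆ uIcc a b := uIcc_subset_uIcc left_mem_uIcc (Icc_subset_uIcc hx)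
  have hcont := (absolutelyContinuousOnInterval_of_sub_eq_integral hf' hf).continuousOn
  have hint : IntervalIntegrable (fun t => f t ^ 2 + f' t ^ 2) volume a b :=
    (hcont.pow 2).intervalIntegrable.add hf'sq
  have hint' : IntervalIntegrable (fun t => 2 * f t * f' t) volume a x :=
    (hf'.mono_set hsub).continuousOn_mul ((hcont.mono hsub).const_smul (2 : ℝ))
  calc |f x ^ 2 - f a ^ 2| = |∫ t in a..x, 2 * f t * f' t| := by
        rw [sq_sub_sq_eq_integral (hf'.mono_set hsub) fun y hy => hf y (hsub hy)]
    _ ≤ ∫ t in a..x, |2 * f t * f' t| := intervalIntegral.abs_integral_le_integral_abs hx.1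
    _ ≤ ∫ t in a..x, (f t ^ 2 + f' t ^ 2) := by
        refine intervalIntegral.integral_mono_on hx.1 hint'.abs (hint.mono_set hsub) fun t _ => ?_
        rw [abs_mul, abs_mul, abs_two, ← sq_abs (f t), ← sq_abs (f' t)]
        exact two_mul_le_add_sq _ _
    _ ≤ ∫ t in a..b, (f t ^ 2 + f' t ^ 2) :=
        intervalIntegral.integral_mono_interval le_rfl hx.1 hx.2
          (ae_of_all _ fun t => by positivity) hint

theorem abs_mul_sq_sub_integral_sq_le (hab : a ≤ b) (hf' : IntervalIntegrable f' volume a b)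
    (hf'sq : IntervalIntegrable (fun t => f' t ^ 2) volume a b)
    (hf : ∀ x ∈ uIcc a b, f x - f a = ∫ t in a..x, f' t) :
    |(b - a) * f a ^ 2 - ∫ t in a..b, f t ^ 2| ≤ (b - a) * ∫ t in a..b, (f t ^ 2 + f' t ^ 2) := by
  have hint : IntervalIntegrable (fun t => f t ^ 2) volume a b :=
    ((absolutelyContinuousOnInterval_of_sub_eq_integral hf' hf).continuousOn.pow 2).intervalIntegrable
  have hdiff : (b - a) * f a ^ 2 - ∫ t in a..b, f t ^ 2 = ∫ t in a..b, (f a ^ 2 - f t ^ 2) := by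
    rw [intervalIntegral.integral_sub intervalIntegrable_const hint,
      intervalIntegral.integral_const, smul_eq_mul]
  calc _ = ‖∫ t in a..b, (f a ^ 2 - f t ^ 2)‖ := by rw [hdiff, Real.norm_eq_abs]
    _ ≤ (∫ t in a..b, (f t ^ 2 + f' t ^ 2)) * |b - a| := by
        refine intervalIntegral.norm_integral_le_of_norm_le_const fun x hx => ?_
        rw [uIoc_of_le hab] at hx
        rw [Real.norm_eq_abs, abs_sub_comm]
        exact abs_sq_sub_sq_le_integral hf' hf'sq hf (Ioc_subset_Icc_self hx)
    _ = _ := by rw [abs_of_nonneg (sub_nonneg.2 hab), mul_comm]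

theorem abs_sum_mul_sq_sub_integral_sq_le {x : ℕ → ℝ} {n : ℕ} {h : ℝ} (hx : Monotone x)
    (hmesh : ∀ k < n, x (k + 1) - x k ≤ h)
    (hf' : IntervalIntegrable f' volume (x 0) (x n))
    (hf'sq : IntervalIntegrable (fun t => f' t ^ 2) volume (x 0) (x n))
    (hf : ∀ y z, x 0 ≤ y → y ≤ z → z ≤ x n → f z - f y = ∫ t in y..z, f' t) :
    |∑ k ∈ Finset.range n, (x (k + 1) - x k) * f (x k) ^ 2 - ∫ t in x 0..x n, f t ^ 2|
      ≤ h * ∫ t in x 0..x n, (f t ^ 2 + f' t ^ 2) := by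
  have hx0n : x 0 ≤ x n := hx n.zero_le
  have hcell : ∀ k < n, Icc (x k) (x (k + 1)) ⊆ Icc (x 0) (x n) := fun k hk =>
    Icc_subset_Icc (hx k.zero_le) (hx hk)
  have hcell' : ∀ k < n, uIcc (x k) (x (k + 1)) ⊆ uIcc (x 0) (x n) := fun k hk => by
    rw [uIcc_of_le (hx k.le_succ), uIcc_of_le hx0n]
    exact hcell k hk
  have hint : IntervalIntegrable (fun t => f t ^ 2) volume (x 0) (x n) :=
    ((absolutelyContinuousOnInterval_of_sub_eq_integral hf' fun y hy => by
      rw [uIcc_of_le hx0n] at hy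
      exact hf _ _ le_rfl hy.1 hy.2).continuousOn.pow 2).intervalIntegrable
  have hbound : ∀ k < n, |(x (k + 1) - x k) * f (x k) ^ 2 - ∫ t in x k..x (k + 1), f t ^ 2|
      ≤ h * ∫ t in x k..x (k + 1), (f t ^ 2 + f' t ^ 2) := fun k hk => by
    refine (abs_mul_sq_sub_integral_sq_le (hx k.le_succ) (hf'.mono_set (hcell' k hk))
      (hf'sq.mono_set (hcell' k hk)) fun y hy => ?_).trans ?_
    · rw [uIcc_of_le (hx k.le_succ)] at hy
      have := hcell k hk hy
      exact hf _ _ (hx k.zero_le) hy.1 this.2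
    · exact mul_le_mul_of_nonneg_right (hmesh k hk)
        (intervalIntegral.integral_nonneg (hx k.le_succ) fun t _ => by positivity)
  rw [← intervalIntegral.sum_integral_adjacent_intervals fun k hk => hint.mono_set (hcell' k hk),
    ← intervalIntegral.sum_integral_adjacent_intervals fun k hk =>
      (hint.add hf'sq).mono_set (hcell' k hk),
    Finset.mul_sum, ← Finset.sum_sub_distrib]
  exact (Finset.abs_sum_le_sum_abs _ _).trans
    (Finset.sum_le_sum fun k hk => hbound k (Finset.mem_range.1 hk))

end Primitive

/-- comparison of the discrete and continuous `L²` norms of `s`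
(inequality (2.11)). -/
theorem stmt_3 (T : ℝ) (hT : 0 < T) (n : ℕ) (hn : 1 ≤ n) (τ : ℝ) (hτ : τ = T / n)
    (s s' : ℝ → ℝ)
    (hs'int : IntervalIntegrable s' volume 0 T)
    (hs'sq : IntervalIntegrable (fun t => (s' t)^2) volume 0 T)
    (hftc : ∀ a b : ℝ, 0 ≤ a → a ≤ b → b ≤ T → s b - s a = ∫ t in a..b, s' t) :
    |∑ k ∈ Finset.range n, τ * (s ((k:ℝ)*τ))^2 - ∫ t in (0:ℝ)..T, (s t)^2|
      ≤ τ * ∫ t in (0:ℝ)..T, ((s t)^2 + (s' t)^2) := by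
  have hτ0 : 0 ≤ τ := hτ ▸ div_nonneg hT.le n.cast_nonneg
  have hnτ : (n : ℝ) * τ = T := by
    rw [hτ, mul_div_cancel₀ _ (Nat.cast_ne_zero.2 (Nat.one_le_iff_ne_zero.1 hn))]
  have hstep : ∀ k : ℕ, ((k + 1 : ℕ) : ℝ) * τ - k * τ = τ := fun k => by push_cast; ring
  have key := abs_sum_mul_sq_sub_integral_sq_le (x := fun k : ℕ => (k : ℝ) * τ) (n := n)
    (fun i j hij => mul_le_mul_of_nonneg_right (Nat.cast_le.2 hij) hτ0) (fun k _ => (hstep k).le)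
    (by simpa [hnτ] using hs'int) (by simpa [hnτ] using hs'sq) (by simpa [hnτ] using hftc)
  simpa only [hstep, Nat.cast_zero, zero_mul, hnτ] using key
end

section
/- Let T>0, n≥2 an integer, τ=T/n, t_k=kτ. Let s∈W²₂[0,T] with s'(0)=0 and g∈W¹₂[0,T], and let ρ>0 satisfy ∫₀ᵀ(s²+s'²) ≤ ρ² and ∫₀ᵀ(g²+g'²) ≤ ρ². Let s_k=s(t_k) and g_k=g(t_k) for k=0,…,n. Then max(‖[s]ₙ‖²_{w²₂}, ‖[g]ₙ‖²_{w¹₂}) ≤ max(‖s‖²_{W²₂[0,T]}, ‖g‖²_{W¹₂[0,T]}) + ρ²·τ + (1/2)·∫₀^τ s''(t)² dt. -/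
/-!
Every discrete sum is compared with integrals over the grid cells `[kτ, (k+1)τ]`. On a cell,
`f(kτ)² ≤ f(t)² + ∫_cell (f² + f'²)` because `(f²)' = 2 f f'`; this costs the extra
`τ ∫ (f² + f'²) ≤ τ ρ²`. By Cauchy–Schwarz a difference quotient is bounded by the cell mean of
`f'²`, and an interior second difference quotient by `τ⁻¹ ∫_cell ∫_t^{t+τ} s''²`; the windows
`[t, t+τ]` cover each point for a length at most `τ`, so these sum to at most `∫₀ᵀ s''²`.
The first second difference, formed with `s(-τ) = s(0)`, is where `s'(0) = 0` enters:
`s'(t)² ≤ t ∫₀^τ s''²`, which integrates to the term `½ ∫₀^τ s''²`.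
-/

open MeasureTheory Set intervalIntegral

theorem IntervalIntegrable.mono_of_le {F : ℝ → ℝ} {a b c d : ℝ}
    (hF : IntervalIntegrable F volume a d) (hab : a ≤ b) (hbc : b ≤ c) (hcd : c ≤ d) :
    IntervalIntegrable F volume b c :=
  hF.mono_set <| uIcc_subset_uIcc (mem_uIcc_of_le hab (hbc.trans hcd))
    (mem_uIcc_of_le (hab.trans hbc) hcd)

theorem sq_integral_le_mul_integral_sq {h : ℝ → ℝ} {a b : ℝ} (hab : a ≤ b)
    (h1 : IntervalIntegrable h volume a b)
    (h2 : IntervalIntegrable (fun t => h t ^ 2) volume a b) :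
    (∫ t in a..b, h t) ^ 2 ≤ (b - a) * ∫ t in a..b, h t ^ 2 := by
  rcases hab.eq_or_lt with rfl | hlt
  · simp
  set c := (∫ t in a..b, h t) / (b - a)
  have hc : c * (b - a) = ∫ t in a..b, h t := div_mul_cancel₀ _ (sub_ne_zero.2 hlt.ne')
  have hexpand : ∫ t in a..b, (h t - c) ^ 2
      = (∫ t in a..b, h t ^ 2) - 2 * c * (∫ t in a..b, h t) + c ^ 2 * (b - a) := by
    have : (fun t => (h t - c) ^ 2) = fun t => (h t ^ 2 - 2 * c * h t) + c ^ 2 := by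
      ext; ring
    rw [this, integral_add (h2.sub (h1.const_mul _)) intervalIntegrable_const,
      integral_sub h2 (h1.const_mul _), intervalIntegral.integral_const_mul,
      intervalIntegral.integral_const, smul_eq_mul]
    ring
  have hvar : 0 ≤ ∫ t in a..b, (h t - c) ^ 2 := integral_nonneg hab fun t _ => sq_nonneg _
  nlinarith [mul_nonneg (sub_nonneg.2 hab) hvar]

theorem continuousOn_integral_add_right {φ : ℝ → ℝ} {a b τ : ℝ} (hτ : 0 ≤ τ)
    (hφ : IntervalIntegrable φ volume a (b + τ)) :
    ContinuousOn (fun t => ∫ u in t..t + τ, φ u) (Icc a b) := by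
  have hΨ : ContinuousOn (fun x => ∫ u in a..x, φ u) (Icc a (b + τ)) :=
    (continuousOn_primitive_interval' hφ left_mem_uIcc).mono Icc_subset_uIcc
  refine ((hΨ.comp (continuous_add_const τ).continuousOn fun t ht =>
    ⟨by linarith [ht.1], by linarith [ht.2]⟩).sub
      (hΨ.mono (Icc_subset_Icc le_rfl (by linarith)))).congr fun t ht => ?_
  exact (integral_interval_sub_left
    (hφ.mono_of_le le_rfl (by linarith [ht.1]) (by linarith [ht.2]))
    (hφ.mono_of_le le_rfl ht.1 (by linarith [ht.2]))).symm

/-- Each point `u` lies in at most a length `τ` of the windows `[t, t + τ]`, `t ∈ [0, L]`. -/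
theorem integral_integral_add_right_le {φ : ℝ → ℝ} {L τ : ℝ} (hL : 0 ≤ L) (hτ : 0 ≤ τ)
    (hφ : IntervalIntegrable φ volume 0 (L + τ)) (hφ0 : ∀ u ∈ Icc 0 (L + τ), 0 ≤ φ u) :
    ∫ t in 0..L, ∫ u in t..t + τ, φ u ≤ τ * ∫ u in 0..L + τ, φ u := by
  set Ψ := fun x => ∫ u in 0..x, φ u
  have hΨc : ContinuousOn Ψ (Icc 0 (L + τ)) :=
    (continuousOn_primitive_interval' hφ left_mem_uIcc).mono Icc_subset_uIcc
  have hΨi : ∀ x y, 0 ≤ x → x ≤ y → y ≤ L + τ → IntervalIntegrable Ψ volume x y :=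
    fun x y hx hxy hy => (hΨc.mono (Icc_subset_Icc hx hy)).intervalIntegrable_of_Icc hxy
  have hΨmono : MonotoneOn Ψ (Icc 0 (L + τ)) := fun x hx y hy hxy => by
    have h1 := integral_interval_sub_left (hφ.mono_of_le le_rfl hy.1 hy.2)
      (hφ.mono_of_le le_rfl hx.1 hx.2)
    have h2 := integral_nonneg (μ := volume) hxy fun u hu =>
      hφ0 u ⟨hx.1.trans hu.1, hu.2.trans hy.2⟩
    simp only [Ψ]
    linarith
  have hshift : ∫ t in 0..L, ∫ u in t..t + τ, φ u = ∫ t in 0..L, (Ψ (t + τ) - Ψ t) := by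
    refine integral_congr fun t ht => ?_
    rw [uIcc_of_le hL] at ht
    exact (integral_interval_sub_left (hφ.mono_of_le le_rfl (by linarith [ht.1])
      (by linarith [ht.2])) (hφ.mono_of_le le_rfl ht.1 (by linarith [ht.2]))).symm
  have hΨshift : IntervalIntegrable (fun t => Ψ (t + τ)) volume 0 L :=
    (hΨc.comp (continuous_add_const τ).continuousOn fun t ht =>
      ⟨by linarith [ht.1], by linarith [ht.2]⟩).intervalIntegrable_of_Icc hL
  rw [hshift, integral_sub hΨshift (hΨi 0 L le_rfl hL (by linarith)), integral_comp_add_right,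
    zero_add]
  have h1 := integral_add_adjacent_intervals (hΨi 0 τ le_rfl hτ (by linarith))
    (hΨi τ (L + τ) hτ (by linarith) le_rfl)
  have h2 := integral_add_adjacent_intervals (hΨi 0 L le_rfl hL (by linarith))
    (hΨi L (L + τ) hL (by linarith) le_rfl)
  have h3 : ∫ t in L..L + τ, Ψ t ≤ τ * Ψ (L + τ) := by
    have := integral_mono_on (by linarith) (hΨi L (L + τ) hL (by linarith) le_rfl)
      intervalIntegrable_const fun t ht =>
        hΨmono ⟨hL.trans ht.1, ht.2⟩ ⟨by linarith, le_rfl⟩ ht.2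
    simpa using this
  have h4 : 0 ≤ ∫ t in 0..τ, Ψ t := integral_nonneg hτ fun t ht => by
    simpa [Ψ] using hΨmono ⟨le_rfl, by linarith⟩ ⟨ht.1, by linarith [ht.2]⟩ ht.1
  linarith

theorem grid_cell_bounds {n k : ℕ} {τ : ℝ} (hτ : 0 ≤ τ) (hk : k < n) :
    0 ≤ (k : ℝ) * τ ∧ (k : ℝ) * τ ≤ (k + 1) * τ ∧ ((k : ℝ) + 1) * τ ≤ n * τ := by
  have hk' : (k : ℝ) + 1 ≤ n := by exact_mod_cast hk
  refine ⟨by positivity, by nlinarith, by nlinarith⟩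

theorem sum_le_integral_of_le_integral_cells {c : ℕ → ℝ} {F : ℝ → ℝ} {τ : ℝ} {n : ℕ}
    (hτ : 0 ≤ τ) (hF : IntervalIntegrable F volume 0 (n * τ))
    (hc : ∀ k < n, c k ≤ ∫ t in k * τ..(k + 1) * τ, F t) :
    ∑ k ∈ Finset.range n, c k ≤ ∫ t in 0..n * τ, F t := by
  have hcell : ∀ k < n, IntervalIntegrable F volume ((k : ℕ) * τ) (((k + 1 : ℕ) : ℝ) * τ) :=
    fun k hk => by
      obtain ⟨h0, hkk, hkn⟩ := grid_cell_bounds hτ hk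
      push_cast
      exact hF.mono_of_le h0 hkk hkn
  calc _ ≤ ∑ k ∈ Finset.range n, ∫ t in k * τ..(k + 1) * τ, F t :=
        Finset.sum_le_sum fun k hk => hc k (Finset.mem_range.1 hk)
    _ = _ := by
      have := sum_integral_adjacent_intervals (a := fun k : ℕ => (k : ℝ) * τ) hcell
      push_cast at this
      simpa using this

theorem Finset.sum_Icc_one_eq_sum_range {M : Type*} [AddCommMonoid M] (g : ℕ → M) (n : ℕ) :
    ∑ k ∈ Finset.Icc 1 n, g k = ∑ k ∈ Finset.range n, g (k + 1) := by
  rw [← Finset.Ico_add_one_right_eq_Icc, Finset.sum_Ico_eq_sum_range]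
  simp [add_comm]

def IsPrimitiveOn (f f' : ℝ → ℝ) (a b : ℝ) : Prop :=
  ∀ x y : ℝ, a ≤ x → x ≤ y → y ≤ b → f y - f x = ∫ t in x..y, f' t

theorem isPrimitiveOn_of_hasDerivWithinAt {f f' : ℝ → ℝ} {a b : ℝ}
    (hf : ∀ t ∈ Icc a b, HasDerivWithinAt f (f' t) (Icc a b) t)
    (hf' : ContinuousOn f' (Icc a b)) : IsPrimitiveOn f f' a b := by
  intro x y hx hxy hy
  have hsub : Icc x y ⊆ Icc a b := Icc_subset_Icc hx hy
  refine (integral_eq_sub_of_hasDerivAt_of_le hxy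
    (fun t ht => (hf t (hsub ht)).continuousWithinAt.mono hsub) (fun t ht => ?_)
    ((hf'.mono hsub).intervalIntegrable_of_Icc hxy)).symm
  exact (hf t (hsub (Ioo_subset_Icc_self ht))).hasDerivAt
    (Icc_mem_nhds (hx.trans_lt ht.1) (ht.2.trans_le hy))

noncomputable def discreteW12NormSq (n : ℕ) (τ : ℝ) (f : ℝ → ℝ) : ℝ :=
  ∑ k ∈ Finset.range n, τ * (f ((k : ℝ) * τ)) ^ 2
    + ∑ k ∈ Finset.Icc 1 n, τ * ((f ((k : ℝ) * τ) - f (((k : ℝ) - 1) * τ)) / τ) ^ 2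

/-- The `k = 0` second difference uses the convention `f (-τ) = f 0`. -/
noncomputable def discreteW22NormSq (n : ℕ) (τ : ℝ) (f : ℝ → ℝ) : ℝ :=
  discreteW12NormSq n τ f
    + (τ * ((f τ - f 0) / τ ^ 2) ^ 2
      + ∑ k ∈ Finset.Icc 1 (n - 1),
          τ * ((f (((k : ℝ) + 1) * τ) - 2 * f ((k : ℝ) * τ) + f (((k : ℝ) - 1) * τ)) / τ ^ 2) ^ 2)

namespace IsPrimitiveOn

variable {f f' f'' : ℝ → ℝ} {a b : ℝ}

theorem mono (h : IsPrimitiveOn f f' a b) {c d : ℝ} (hac : a ≤ c) (hdb : d ≤ b) :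
    IsPrimitiveOn f f' c d :=
  fun x y hx hxy hy => h x y (hac.trans hx) hxy (hy.trans hdb)

theorem eqOn (h : IsPrimitiveOn f f' a b) :
    EqOn f (fun x => f a + ∫ t in a..x, f' t) (Icc a b) := fun x hx => by
  have := h a x le_rfl hx.1 hx.2
  simp only
  linarith

theorem continuousOn (h : IsPrimitiveOn f f' a b) (hf' : IntervalIntegrable f' volume a b) :
    ContinuousOn f (Icc a b) :=
  (continuousOn_const.add ((continuousOn_primitive_interval' hf' left_mem_uIcc).mono
    Icc_subset_uIcc)).congr h.eqOn

/-- `f` agrees on `[a, b]` with the absolutely continuous function `f a + ∫ₐˣ f'`, whose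
derivative is `f'` almost everywhere (Lebesgue differentiation). -/
theorem sq_sub_sq (h : IsPrimitiveOn f f' a b) (hab : a ≤ b)
    (hf' : IntervalIntegrable f' volume a b) :
    f b ^ 2 - f a ^ 2 = ∫ t in a..b, 2 * f t * f' t := by
  set F := fun x => f a + ∫ t in a..x, f' t
  have hF : AbsolutelyContinuousOnInterval F a b :=
    (LipschitzWith.const (f a)).lipschitzOnWith.absolutelyContinuousOnInterval.add
      (hf'.absolutelyContinuousOnInterval_intervalIntegral left_mem_uIcc)
  have hFb : F b = f b := (h.eqOn ⟨hab, le_rfl⟩).symm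
  have hFa : F a = f a := by simp [F]
  rw [← hFb, ← hFa, sq, sq, ← hF.integral_deriv_mul_eq_sub hF]
  refine integral_congr_ae ?_
  filter_upwards [hf'.ae_hasDerivAt_integral] with x hx hxI
  have hxI' : x ∈ Icc a b := by
    rw [uIoc_of_le hab] at hxI
    exact Ioc_subset_Icc_self hxI
  rw [((hx (Icc_subset_uIcc hxI') a left_mem_uIcc).const_add (f a)).deriv, h.eqOn hxI']
  ring

theorem mul_sq_le (h : IsPrimitiveOn f f' a b) (hab : a ≤ b)
    (hf' : IntervalIntegrable f' volume a b)
    (hf'2 : IntervalIntegrable (fun t => f' t ^ 2) volume a b) :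
    (b - a) * f a ^ 2
      ≤ (∫ t in a..b, f t ^ 2) + (b - a) * ∫ t in a..b, (f t ^ 2 + f' t ^ 2) := by
  have hfc := h.continuousOn hf'
  have hf2 : IntervalIntegrable (fun t => f t ^ 2) volume a b :=
    (hfc.pow 2).intervalIntegrable_of_Icc hab
  have hE : IntervalIntegrable (fun t => f t ^ 2 + f' t ^ 2) volume a b := hf2.add hf'2
  have hff' : IntervalIntegrable (fun t => 2 * f t * f' t) volume a b :=
    hf'.continuousOn_mul ((continuousOn_const.mul hfc).mono (by rw [uIcc_of_le hab]))
  set C := ∫ t in a..b, (f t ^ 2 + f' t ^ 2)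
  have hpt : ∀ t ∈ Icc a b, f a ^ 2 ≤ f t ^ 2 + C := by
    intro t ht
    have hsq := (h.mono le_rfl ht.2).sq_sub_sq ht.1 (hf'.mono_of_le le_rfl ht.1 ht.2)
    have h1 : -∫ u in a..t, 2 * f u * f' u ≤ ∫ u in a..t, (f u ^ 2 + f' u ^ 2) := by
      rw [← intervalIntegral.integral_neg]
      exact integral_mono_on ht.1 (hff'.mono_of_le le_rfl ht.1 ht.2).neg
        (hE.mono_of_le le_rfl ht.1 ht.2) fun u _ => by nlinarith [sq_nonneg (f u + f' u)]
    have h2 : ∫ u in a..t, (f u ^ 2 + f' u ^ 2) ≤ C :=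
      integral_mono_interval le_rfl ht.1 ht.2 (ae_of_all _ fun u => by positivity) hE
    linarith
  calc (b - a) * f a ^ 2 = ∫ _ in a..b, f a ^ 2 := by simp
    _ ≤ ∫ t in a..b, (f t ^ 2 + C) :=
      integral_mono_on hab intervalIntegrable_const (hf2.add intervalIntegrable_const) hpt
    _ = _ := by rw [integral_add hf2 intervalIntegrable_const]; simp

theorem sq_sub_le (h : IsPrimitiveOn f f' a b) (hab : a ≤ b)
    (hf' : IntervalIntegrable f' volume a b)
    (hf'2 : IntervalIntegrable (fun t => f' t ^ 2) volume a b) :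
    (f b - f a) ^ 2 ≤ (b - a) * ∫ t in a..b, f' t ^ 2 := by
  rw [h a b le_rfl hab le_rfl]
  exact sq_integral_le_mul_integral_sq hab hf' hf'2

theorem mul_sq_sub_div_sq_le_of_deriv_eq_zero (hf : IsPrimitiveOn f f' a b)
    (hf' : IsPrimitiveOn f' f'' a b) (hf'a : f' a = 0) (hab : a < b)
    (h1 : IntervalIntegrable f'' volume a b)
    (h2 : IntervalIntegrable (fun t => f'' t ^ 2) volume a b) :
    (b - a) * ((f b - f a) / (b - a) ^ 2) ^ 2 ≤ 1 / 2 * ∫ t in a..b, f'' t ^ 2 := by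
  set M := ∫ t in a..b, f'' t ^ 2
  have hf'c := hf'.continuousOn h1
  have hpt : ∀ t ∈ Icc a b, f' t ^ 2 ≤ (t - a) * M := by
    intro t ht
    have hrep := hf' a t le_rfl ht.1 ht.2
    rw [hf'a, sub_zero] at hrep
    rw [hrep]
    calc _ ≤ (t - a) * ∫ u in a..t, f'' u ^ 2 :=
          sq_integral_le_mul_integral_sq ht.1 (h1.mono_of_le le_rfl ht.1 ht.2)
            (h2.mono_of_le le_rfl ht.1 ht.2)
      _ ≤ (t - a) * M := mul_le_mul_of_nonneg_left
          (integral_mono_interval le_rfl ht.1 ht.2 (ae_of_all _ fun u => sq_nonneg _) h2)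
          (sub_nonneg.2 ht.1)
  have hint : ∫ t in a..b, f' t ^ 2 ≤ (b - a) ^ 2 / 2 * M :=
    calc _ ≤ ∫ t in a..b, (t - a) * M :=
          integral_mono_on hab.le ((hf'c.pow 2).intervalIntegrable_of_Icc hab.le)
            ((by fun_prop : Continuous fun t => (t - a) * M).intervalIntegrable a b) hpt
      _ = _ := by
        rw [intervalIntegral.integral_mul_const,
          intervalIntegral.integral_comp_sub_right (fun x => x)]
        simp
  have hdiff : (f b - f a) ^ 2 ≤ (b - a) ^ 3 / 2 * M :=
    calc _ ≤ (b - a) * ∫ t in a..b, f' t ^ 2 := hf.sq_sub_le hab.le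
          (hf'c.intervalIntegrable_of_Icc hab.le) ((hf'c.pow 2).intervalIntegrable_of_Icc hab.le)
      _ ≤ (b - a) * ((b - a) ^ 2 / 2 * M) := mul_le_mul_of_nonneg_left hint (sub_nonneg.2 hab.le)
      _ = _ := by ring
  have hba : 0 < b - a := sub_pos.2 hab
  calc (b - a) * ((f b - f a) / (b - a) ^ 2) ^ 2 = (f b - f a) ^ 2 / (b - a) ^ 3 := by
        field_simp
    _ ≤ ((b - a) ^ 3 / 2 * M) / (b - a) ^ 3 := by gcongr
    _ = 1 / 2 * M := by field_simp

/-- The second difference is `∫ₐ^{a+τ} (f' (t + τ) - f' t) dt`, and each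
`f' (t + τ) - f' t = ∫ₜ^{t+τ} f''`. -/
theorem sq_second_diff_le {τ : ℝ} (hf : IsPrimitiveOn f f' a (a + 2 * τ))
    (hf' : IsPrimitiveOn f' f'' a (a + 2 * τ)) (hτ : 0 ≤ τ)
    (h1 : IntervalIntegrable f'' volume a (a + 2 * τ))
    (h2 : IntervalIntegrable (fun t => f'' t ^ 2) volume a (a + 2 * τ)) :
    (f (a + 2 * τ) - 2 * f (a + τ) + f a) ^ 2
      ≤ τ ^ 2 * ∫ t in a..a + τ, ∫ u in t..t + τ, f'' u ^ 2 := by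
  have hf'c := hf'.continuousOn h1
  have hshift : ContinuousOn (fun t => f' (t + τ)) (Icc a (a + τ)) :=
    hf'c.comp (continuous_add_const τ).continuousOn fun t ht =>
      ⟨by linarith [ht.1], by linarith [ht.2]⟩
  have hf'ca : ContinuousOn f' (Icc a (a + τ)) := hf'c.mono (Icc_subset_Icc le_rfl (by linarith))
  have hgc : ContinuousOn (fun t => f' (t + τ) - f' t) (Icc a (a + τ)) := hshift.sub hf'ca
  have haτ : a ≤ a + τ := by linarith
  have hD : f (a + 2 * τ) - 2 * f (a + τ) + f a = ∫ t in a..a + τ, (f' (t + τ) - f' t) := by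
    rw [integral_sub (hshift.intervalIntegrable_of_Icc haτ) (hf'ca.intervalIntegrable_of_Icc haτ),
      integral_comp_add_right, ← hf (a + τ) (a + τ + τ) haτ (by linarith) (by linarith),
      ← hf a (a + τ) le_rfl haτ (by linarith)]
    ring_nf
  have hpt : ∀ t ∈ Icc a (a + τ), (f' (t + τ) - f' t) ^ 2 ≤ τ * ∫ u in t..t + τ, f'' u ^ 2 := by
    intro t ht
    rw [hf' t (t + τ) ht.1 (by linarith) (by linarith [ht.2])]
    simpa using sq_integral_le_mul_integral_sq (by linarith : t ≤ t + τ)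
      (h1.mono_of_le ht.1 (by linarith) (by linarith [ht.2]))
      (h2.mono_of_le ht.1 (by linarith) (by linarith [ht.2]))
  have hΦ : IntervalIntegrable (fun t => ∫ u in t..t + τ, f'' u ^ 2) volume a (a + τ) :=
    (continuousOn_integral_add_right hτ (h2.mono_of_le le_rfl (by linarith)
      (by linarith))).intervalIntegrable_of_Icc haτ
  calc _ = (∫ t in a..a + τ, (f' (t + τ) - f' t)) ^ 2 := by rw [hD]
    _ ≤ τ * ∫ t in a..a + τ, (f' (t + τ) - f' t) ^ 2 := by
      simpa using sq_integral_le_mul_integral_sq haτ (hgc.intervalIntegrable_of_Icc haτ)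
        ((hgc.pow 2).intervalIntegrable_of_Icc haτ)
    _ ≤ τ * ∫ t in a..a + τ, τ * ∫ u in t..t + τ, f'' u ^ 2 := mul_le_mul_of_nonneg_left
        (integral_mono_on haτ ((hgc.pow 2).intervalIntegrable_of_Icc haτ) (hΦ.const_mul τ) hpt) hτ
    _ = _ := by rw [intervalIntegral.integral_const_mul]; ring

variable {n : ℕ} {τ : ℝ}

theorem sum_mul_sq_le (h : IsPrimitiveOn f f' 0 (n * τ)) (hτ : 0 ≤ τ)
    (hf' : IntervalIntegrable f' volume 0 (n * τ))
    (hf'2 : IntervalIntegrable (fun t => f' t ^ 2) volume 0 (n * τ)) :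
    ∑ k ∈ Finset.range n, τ * f (k * τ) ^ 2
      ≤ (∫ t in 0..n * τ, f t ^ 2) + τ * ∫ t in 0..n * τ, (f t ^ 2 + f' t ^ 2) := by
  have hnτ : 0 ≤ (n : ℝ) * τ := by positivity
  have hf2 : IntervalIntegrable (fun t => f t ^ 2) volume 0 (n * τ) :=
    ((h.continuousOn hf').pow 2).intervalIntegrable_of_Icc hnτ
  have hE := hf2.add hf'2
  have hsplit : ∀ x y, 0 ≤ x → x ≤ y → y ≤ n * τ →
      ∫ t in x..y, (f t ^ 2 + τ * (f t ^ 2 + f' t ^ 2))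
        = (∫ t in x..y, f t ^ 2) + τ * ∫ t in x..y, (f t ^ 2 + f' t ^ 2) :=
    fun x y hx hxy hy => by
      rw [integral_add (hf2.mono_of_le hx hxy hy) ((hE.mono_of_le hx hxy hy).const_mul τ),
        intervalIntegral.integral_const_mul]
  rw [← hsplit 0 (n * τ) le_rfl hnτ le_rfl]
  refine sum_le_integral_of_le_integral_cells hτ (hf2.add (hE.const_mul τ)) fun k hk => ?_
  obtain ⟨h0, hkk, hkn⟩ := grid_cell_bounds hτ hk
  rw [hsplit _ _ h0 hkk hkn]
  have := (h.mono h0 hkn).mul_sq_le hkk (hf'.mono_of_le h0 hkk hkn) (hf'2.mono_of_le h0 hkk hkn)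
  rwa [show ((k : ℝ) + 1) * τ - k * τ = τ by ring] at this

theorem sum_mul_sq_sub_div_le (h : IsPrimitiveOn f f' 0 (n * τ)) (hτ : 0 < τ)
    (hf' : IntervalIntegrable f' volume 0 (n * τ))
    (hf'2 : IntervalIntegrable (fun t => f' t ^ 2) volume 0 (n * τ)) :
    ∑ k ∈ Finset.Icc 1 n, τ * ((f (k * τ) - f ((k - 1) * τ)) / τ) ^ 2
      ≤ ∫ t in 0..n * τ, f' t ^ 2 := by
  rw [Finset.sum_Icc_one_eq_sum_range]
  refine sum_le_integral_of_le_integral_cells hτ.le hf'2 fun k hk => ?_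
  obtain ⟨h0, hkk, hkn⟩ := grid_cell_bounds hτ.le hk
  have := (h.mono h0 hkn).sq_sub_le hkk (hf'.mono_of_le h0 hkk hkn) (hf'2.mono_of_le h0 hkk hkn)
  rw [show ((k : ℝ) + 1) * τ - k * τ = τ by ring] at this
  push_cast
  rw [add_sub_cancel_right]
  calc τ * ((f ((k + 1) * τ) - f (k * τ)) / τ) ^ 2
      = (f ((k + 1) * τ) - f (k * τ)) ^ 2 / τ := by field_simp
    _ ≤ τ * (∫ t in k * τ..(k + 1) * τ, f' t ^ 2) / τ := by gcongr
    _ = _ := by field_simp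

theorem sum_mul_second_diff_le (hf : IsPrimitiveOn f f' 0 (n * τ))
    (hf' : IsPrimitiveOn f' f'' 0 (n * τ)) (hτ : 0 < τ)
    (h1 : IntervalIntegrable f'' volume 0 (n * τ))
    (h2 : IntervalIntegrable (fun t => f'' t ^ 2) volume 0 (n * τ)) :
    ∑ k ∈ Finset.Icc 1 (n - 1),
        τ * ((f ((k + 1) * τ) - 2 * f (k * τ) + f ((k - 1) * τ)) / τ ^ 2) ^ 2
      ≤ ∫ t in 0..n * τ, f'' t ^ 2 := by
  obtain _ | m := n
  · simp
  rw [Nat.add_sub_cancel, Finset.sum_Icc_one_eq_sum_range]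
  have hmτ : ((m + 1 : ℕ) : ℝ) * τ = m * τ + τ := by push_cast; ring
  rw [hmτ] at hf hf' h1 h2 ⊢
  have hΦ : IntervalIntegrable (fun t => ∫ u in t..t + τ, f'' u ^ 2) volume 0 (m * τ) :=
    (continuousOn_integral_add_right hτ.le h2).intervalIntegrable_of_Icc (by positivity)
  calc _ ≤ ∫ t in 0..m * τ, τ⁻¹ * ∫ u in t..t + τ, f'' u ^ 2 :=
        sum_le_integral_of_le_integral_cells hτ.le (hΦ.const_mul _) fun k hk => ?_
    _ = τ⁻¹ * ∫ t in 0..m * τ, ∫ u in t..t + τ, f'' u ^ 2 :=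
        intervalIntegral.integral_const_mul _ _
    _ ≤ τ⁻¹ * (τ * ∫ u in 0..m * τ + τ, f'' u ^ 2) := by
        gcongr
        exact integral_integral_add_right_le (by positivity) hτ.le h2 fun u _ => sq_nonneg _
    _ = _ := by field_simp
  obtain ⟨h0, hkk, hkm⟩ := grid_cell_bounds hτ.le hk
  have hk2 : (k : ℝ) * τ + 2 * τ ≤ m * τ + τ := by linarith
  have key := (hf.mono h0 hk2).sq_second_diff_le (hf'.mono h0 hk2) hτ.le
    (h1.mono_of_le h0 (by linarith) hk2) (h2.mono_of_le h0 (by linarith) hk2)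
  push_cast
  rw [show ((k : ℝ) + 1 + 1) * τ = k * τ + 2 * τ by ring,
    show ((k : ℝ) + 1) * τ = k * τ + τ by ring, add_sub_cancel_right,
    intervalIntegral.integral_const_mul]
  set D := f (k * τ + 2 * τ) - 2 * f (k * τ + τ) + f (k * τ)
  set I := ∫ t in k * τ..k * τ + τ, ∫ u in t..t + τ, f'' u ^ 2
  calc τ * (D / τ ^ 2) ^ 2 = D ^ 2 / τ ^ 3 := by field_simp
    _ ≤ τ ^ 2 * I / τ ^ 3 := by gcongr
    _ = τ⁻¹ * I := by field_simp

theorem discreteW12NormSq_le (h : IsPrimitiveOn f f' 0 (n * τ)) (hτ : 0 < τ)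
    (hf' : IntervalIntegrable f' volume 0 (n * τ))
    (hf'2 : IntervalIntegrable (fun t => f' t ^ 2) volume 0 (n * τ)) :
    discreteW12NormSq n τ f
      ≤ (∫ t in 0..n * τ, (f t ^ 2 + f' t ^ 2)) + τ * ∫ t in 0..n * τ, (f t ^ 2 + f' t ^ 2) := by
  have hf2 : IntervalIntegrable (fun t => f t ^ 2) volume 0 (n * τ) :=
    ((h.continuousOn hf').pow 2).intervalIntegrable_of_Icc (by positivity)
  have h0 := h.sum_mul_sq_le hτ.le hf' hf'2
  have h1 := h.sum_mul_sq_sub_div_le hτ hf' hf'2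
  have hsplit := integral_add hf2 hf'2
  unfold discreteW12NormSq
  linarith

theorem discreteW22NormSq_le (hf : IsPrimitiveOn f f' 0 (n * τ))
    (hf' : IsPrimitiveOn f' f'' 0 (n * τ)) (hf'0 : f' 0 = 0) (hn : 0 < n) (hτ : 0 < τ)
    (h1 : IntervalIntegrable f'' volume 0 (n * τ))
    (h2 : IntervalIntegrable (fun t => f'' t ^ 2) volume 0 (n * τ)) :
    discreteW22NormSq n τ f
      ≤ (∫ t in 0..n * τ, (f t ^ 2 + f' t ^ 2 + f'' t ^ 2))
        + τ * (∫ t in 0..n * τ, (f t ^ 2 + f' t ^ 2)) + 1 / 2 * ∫ t in 0..τ, f'' t ^ 2 := by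
  have hnτ : 0 ≤ (n : ℝ) * τ := by positivity
  have hτn : τ ≤ n * τ := le_mul_of_one_le_left hτ.le (by exact_mod_cast hn)
  have hf'c := hf'.continuousOn h1
  have hf'i : IntervalIntegrable f' volume 0 (n * τ) := hf'c.intervalIntegrable_of_Icc hnτ
  have hf'2 : IntervalIntegrable (fun t => f' t ^ 2) volume 0 (n * τ) :=
    (hf'c.pow 2).intervalIntegrable_of_Icc hnτ
  have hf2 : IntervalIntegrable (fun t => f t ^ 2) volume 0 (n * τ) :=
    ((hf.continuousOn hf'i).pow 2).intervalIntegrable_of_Icc hnτ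
  have hW1 := hf.discreteW12NormSq_le hτ hf'i hf'2
  have hfirst := (hf.mono le_rfl hτn).mul_sq_sub_div_sq_le_of_deriv_eq_zero (hf'.mono le_rfl hτn)
    hf'0 hτ (h1.mono_of_le le_rfl hτ.le hτn) (h2.mono_of_le le_rfl hτ.le hτn)
  rw [sub_zero] at hfirst
  have hinterior := hf.sum_mul_second_diff_le hf' hτ h1 h2
  have hsplit := integral_add (hf2.add hf'2) h2
  unfold discreteW22NormSq
  linarith

end IsPrimitiveOn

theorem stmt_5_general (T : ℝ) (hT : 0 < T) (n : ℕ) (hn : 2 ≤ n) (τ : ℝ) (hτ : τ = T / n)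
    (s s' s'' g g' : ℝ → ℝ) (ρ : ℝ)
    (hs : ∀ t ∈ Set.Icc (0:ℝ) T, HasDerivWithinAt s (s' t) (Set.Icc (0:ℝ) T) t)
    (hs''int : IntervalIntegrable s'' volume 0 T)
    (hs''sq : IntervalIntegrable (fun t => (s'' t)^2) volume 0 T)
    (hftcs : ∀ a b : ℝ, 0 ≤ a → a ≤ b → b ≤ T → s' b - s' a = ∫ t in a..b, s'' t)
    (hs'0 : s' 0 = 0)
    (hg'int : IntervalIntegrable g' volume 0 T)
    (hg'sq : IntervalIntegrable (fun t => (g' t)^2) volume 0 T)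
    (hftcg : ∀ a b : ℝ, 0 ≤ a → a ≤ b → b ≤ T → g b - g a = ∫ t in a..b, g' t)
    (hsρ : (∫ t in (0:ℝ)..T, ((s t)^2 + (s' t)^2)) ≤ ρ^2)
    (hgρ : (∫ t in (0:ℝ)..T, ((g t)^2 + (g' t)^2)) ≤ ρ^2) :
    max
      (∑ k ∈ Finset.range n, τ * (s ((k:ℝ)*τ))^2
        + ∑ k ∈ Finset.Icc 1 n, τ * ((s ((k:ℝ)*τ) - s (((k:ℝ)-1)*τ))/τ)^2
        + (τ * ((s τ - s 0)/τ^2)^2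
            + ∑ k ∈ Finset.Icc 1 (n-1),
                τ * ((s (((k:ℝ)+1)*τ) - 2*s ((k:ℝ)*τ) + s (((k:ℝ)-1)*τ))/τ^2)^2))
      (∑ k ∈ Finset.range n, τ * (g ((k:ℝ)*τ))^2
        + ∑ k ∈ Finset.Icc 1 n, τ * ((g ((k:ℝ)*τ) - g (((k:ℝ)-1)*τ))/τ)^2)
    ≤ max (∫ t in (0:ℝ)..T, ((s t)^2 + (s' t)^2 + (s'' t)^2))
          (∫ t in (0:ℝ)..T, ((g t)^2 + (g' t)^2))
      + ρ^2 * τ + (1/2) * ∫ t in (0:ℝ)..τ, (s'' t)^2 := by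
  have hn0 : (0 : ℝ) < n := by exact_mod_cast (by omega : 0 < n)
  have hτ0 : 0 < τ := hτ ▸ div_pos hT hn0
  obtain rfl : T = n * τ := by rw [hτ]; field_simp
  have hs'prim : IsPrimitiveOn s' s'' 0 (n * τ) := hftcs
  have hsprim := isPrimitiveOn_of_hasDerivWithinAt hs (hs'prim.continuousOn hs''int)
  have hS := hsprim.discreteW22NormSq_le hs'prim hs'0 (by omega) hτ0 hs''int hs''sq
  have hG := IsPrimitiveOn.discreteW12NormSq_le hftcg hτ0 hg'int hg'sq
  have hs''τ : 0 ≤ ∫ t in 0..τ, s'' t ^ 2 := integral_nonneg hτ0.le fun t _ => sq_nonneg _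
  change max (discreteW22NormSq n τ s) (discreteW12NormSq n τ g) ≤ _
  refine max_le ?_ ?_
  · have := mul_le_mul_of_nonneg_left hsρ hτ0.le
    linarith [le_max_left (∫ t in 0..n * τ, (s t ^ 2 + s' t ^ 2 + s'' t ^ 2))
      (∫ t in 0..n * τ, (g t ^ 2 + g' t ^ 2))]
  · have := mul_le_mul_of_nonneg_left hgρ hτ0.le
    linarith [le_max_right (∫ t in 0..n * τ, (s t ^ 2 + s' t ^ 2 + s'' t ^ 2))
      (∫ t in 0..n * τ, (g t ^ 2 + g' t ^ 2))]

/-- inequality (2.13), bounding the discrete norms of the sampled control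
vector by the continuous norms plus `ρ²τ + (1/2)∫₀^τ s''²`. -/
theorem stmt_5 (T : ℝ) (hT : 0 < T) (n : ℕ) (hn : 2 ≤ n) (τ : ℝ) (hτ : τ = T / n)
    (s s' s'' g g' : ℝ → ℝ) (ρ : ℝ) (hρ : 0 < ρ)
    (hs : ∀ t ∈ Set.Icc (0:ℝ) T, HasDerivWithinAt s (s' t) (Set.Icc (0:ℝ) T) t)
    (hs''int : IntervalIntegrable s'' volume 0 T)
    (hs''sq : IntervalIntegrable (fun t => (s'' t)^2) volume 0 T)
    (hftcs : ∀ a b : ℝ, 0 ≤ a → a ≤ b → b ≤ T → s' b - s' a = ∫ t in a..b, s'' t)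
    (hs'0 : s' 0 = 0)
    (hg'int : IntervalIntegrable g' volume 0 T)
    (hg'sq : IntervalIntegrable (fun t => (g' t)^2) volume 0 T)
    (hftcg : ∀ a b : ℝ, 0 ≤ a → a ≤ b → b ≤ T → g b - g a = ∫ t in a..b, g' t)
    (hsρ : (∫ t in (0:ℝ)..T, ((s t)^2 + (s' t)^2)) ≤ ρ^2)
    (hgρ : (∫ t in (0:ℝ)..T, ((g t)^2 + (g' t)^2)) ≤ ρ^2) :
    max
      (∑ k ∈ Finset.range n, τ * (s ((k:ℝ)*τ))^2
        + ∑ k ∈ Finset.Icc 1 n, τ * ((s ((k:ℝ)*τ) - s (((k:ℝ)-1)*τ))/τ)^2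
        + (τ * ((s τ - s 0)/τ^2)^2
            + ∑ k ∈ Finset.Icc 1 (n-1),
                τ * ((s (((k:ℝ)+1)*τ) - 2*s ((k:ℝ)*τ) + s (((k:ℝ)-1)*τ))/τ^2)^2))
      (∑ k ∈ Finset.range n, τ * (g ((k:ℝ)*τ))^2
        + ∑ k ∈ Finset.Icc 1 n, τ * ((g ((k:ℝ)*τ) - g (((k:ℝ)-1)*τ))/τ)^2)
    ≤ max (∫ t in (0:ℝ)..T, ((s t)^2 + (s' t)^2 + (s'' t)^2))
          (∫ t in (0:ℝ)..T, ((g t)^2 + (g' t)^2))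
      + ρ^2 * τ + (1/2) * ∫ t in (0:ℝ)..τ, (s'' t)^2 :=
  stmt_5_general T hT n hn τ hτ s s' s'' g g' ρ hs hs''int hs''sq hftcs hs'0 hg'int hg'sq hftcg hsρ
    hgρ
end

section
/- Let m≥1 be an integer, a₀>0, M≥a₀, and set τ₀=(M²/(2a₀)+M)^{−1}. Let 0<τ<τ₀, let h₀,…,h_{m-1}>0, and let a_i, b_i, c_i (i=0,…,m−1) be reals with a_i≥a₀, |b_i|≤M, |c_i|≤M. Suppose u₀,…,u_m∈ℝ satisfy ∑_{i=0}^{m-1} h_i·a_i·u_{ix}² + (1/τ)·∑_{i=0}^{m-1} h_i·u_i² = ∑_{i=0}^{m-1} h_i·(b_i·u_{ix}·u_i + c_i·u_i²), where u_{ix}=(u_{i+1}−u_i)/h_i. Then u_i=0 for all i=0,…,m. -/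
/-!
Per cell, Young's inequality `|b x v| ≤ a₀ x²/2 + M² v²/(2a₀)` bounds the cell's
contribution `a x² + v²/τ - b x v - c v²` (with `x = u_{ix}`, `v = u_i`) from below by
`a₀ x²/2 + (1/τ - M²/(2a₀) - M) v²`, a positive definite form exactly when `τ < τ₀`.
The identity says that the `h_i`-weighted sum of these contributions vanishes, so every `u_i`
with `i < m` and every difference quotient vanish, and then also `u_m = 0`.
-/

section Coercivity

variable {a₀ M a b c T x v : ℝ}

theorem mul_mul_le_of_abs_le (ha₀ : 0 < a₀) (hb : |b| ≤ M) :
    b * x * v ≤ a₀ / 2 * x ^ 2 + M ^ 2 / (2 * a₀) * v ^ 2 := by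
  have hbM : b ^ 2 ≤ M ^ 2 := sq_abs b ▸ pow_le_pow_left₀ (abs_nonneg b) hb 2
  have hyoung := two_mul_le_add_sq (a₀ * x) (b * v)
  rw [show a₀ / 2 * x ^ 2 + M ^ 2 / (2 * a₀) * v ^ 2
      = (a₀ ^ 2 * x ^ 2 + M ^ 2 * v ^ 2) / (2 * a₀) by field_simp,
    le_div_iff₀ (by positivity)]
  nlinarith [mul_le_mul_of_nonneg_right hbM (sq_nonneg v)]

theorem coercive_lower_bound (ha₀ : 0 < a₀) (ha : a₀ ≤ a) (hb : |b| ≤ M) (hc : |c| ≤ M) :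
    a₀ / 2 * x ^ 2 + (T - (M ^ 2 / (2 * a₀) + M)) * v ^ 2
      ≤ a * x ^ 2 + T * v ^ 2 - (b * x * v + c * v ^ 2) := by
  have hbxv := mul_mul_le_of_abs_le (x := x) (v := v) ha₀ hb
  have hcv : c * v ^ 2 ≤ M * v ^ 2 :=
    mul_le_mul_of_nonneg_right ((le_abs_self c).trans hc) (sq_nonneg v)
  have hax : a₀ * x ^ 2 ≤ a * x ^ 2 := mul_le_mul_of_nonneg_right ha (sq_nonneg x)
  nlinarith

theorem eq_zero_of_posDef_form_le_zero {α β : ℝ} (hα : 0 < α) (hβ : 0 < β)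
    (hform : α * x ^ 2 + β * v ^ 2 ≤ 0) : x = 0 ∧ v = 0 := by
  have hαx := mul_nonneg hα.le (sq_nonneg x)
  have hβv := mul_nonneg hβ.le (sq_nonneg v)
  refine ⟨(sq_nonpos_iff _).mp (nonpos_of_mul_nonpos_right ?_ hα),
    (sq_nonpos_iff _).mp (nonpos_of_mul_nonpos_right ?_ hβ)⟩ <;> linarith

end Coercivity

theorem Finset.eq_zero_of_nonneg_of_le_of_sum_eq_zero {ι : Type*} {s : Finset ι}
    {f g : ι → ℝ}
    (hg : ∀ i ∈ s, 0 ≤ g i) (hgf : ∀ i ∈ s, g i ≤ f i) (hf : ∑ i ∈ s, f i = 0) :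
    ∀ i ∈ s, g i = 0 := by
  have hsum : ∑ i ∈ s, g i = 0 :=
    le_antisymm (hf ▸ Finset.sum_le_sum hgf) (Finset.sum_nonneg hg)
  exact (Finset.sum_eq_zero_iff_of_nonneg hg).mp hsum

theorem forall_le_eq_zero_of_forall_lt {m : ℕ} (hm : 1 ≤ m) {u : ℕ → ℝ}
    (hu : ∀ i < m, u i = 0 ∧ u (i + 1) = u i) : ∀ i ≤ m, u i = 0
  | 0, _ => (hu 0 hm).1
  | j + 1, hj => by
    obtain ⟨hj0, hj1⟩ := hu j hj
    rw [hj1, hj0]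

theorem stmt_10_general (m : ℕ) (hm : 1 ≤ m) (a₀ M : ℝ) (ha₀ : 0 < a₀)
    (τ : ℝ) (hτ0 : 0 < τ) (hτ : τ < (M^2/(2*a₀) + M)⁻¹)
    (h a b c : ℕ → ℝ) (hh : ∀ i < m, 0 < h i)
    (ha : ∀ i < m, a₀ ≤ a i) (hb : ∀ i < m, |b i| ≤ M) (hc : ∀ i < m, |c i| ≤ M)
    (u : ℕ → ℝ)
    (hid : ∑ i ∈ Finset.range m, h i * a i * ((u (i+1) - u i)/h i)^2
          + (1/τ) * ∑ i ∈ Finset.range m, h i * (u i)^2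
        = ∑ i ∈ Finset.range m,
            h i * (b i * ((u (i+1) - u i)/h i) * u i + c i * (u i)^2)) :
    ∀ i ≤ m, u i = 0 := by
  set x : ℕ → ℝ := fun i => (u (i + 1) - u i) / h i with hx
  have hK : 0 < M ^ 2 / (2 * a₀) + M := inv_pos.mp (hτ0.trans hτ)
  have hβ : 0 < 1 / τ - (M ^ 2 / (2 * a₀) + M) := by
    rw [one_div, sub_pos]
    exact (lt_inv_comm₀ hτ0 hK).mp hτ
  have henergy : ∑ i ∈ Finset.range m,
      h i * (a i * x i ^ 2 + 1 / τ * u i ^ 2 - (b i * x i * u i + c i * u i ^ 2)) = 0 := by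
    rw [Finset.mul_sum, ← Finset.sum_add_distrib] at hid
    rw [← sub_eq_zero_of_eq hid, ← Finset.sum_sub_distrib]
    exact Finset.sum_congr rfl fun i _ => by ring
  have hcell := Finset.eq_zero_of_nonneg_of_le_of_sum_eq_zero
    (g := fun i => h i * (a₀ / 2 * x i ^ 2 + (1 / τ - (M ^ 2 / (2 * a₀) + M)) * u i ^ 2))
    (fun i hi => by have := hh i (Finset.mem_range.mp hi); positivity)
    (fun i hi => have hi := Finset.mem_range.mp hi
      mul_le_mul_of_nonneg_left (coercive_lower_bound ha₀ (ha i hi) (hb i hi) (hc i hi))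
        (hh i hi).le)
    henergy
  refine forall_le_eq_zero_of_forall_lt hm fun i hi => ?_
  have hhi := hh i hi
  obtain ⟨hxi, hui⟩ := eq_zero_of_posDef_form_le_zero (half_pos ha₀) hβ
    ((mul_eq_zero.mp (hcell i (Finset.mem_range.mpr hi))).resolve_left hhi.ne').le
  refine ⟨hui, ?_⟩
  rw [hx, div_eq_zero_iff, sub_eq_zero] at hxi
  exact hxi.resolve_right hhi.ne'

/-- coercivity in Lemma 2.1: any solution of the homogeneous discrete scheme
vanishes when the time step is below the threshold `τ₀ = (M²/(2a₀)+M)⁻¹`. -/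
theorem stmt_10 (m : ℕ) (hm : 1 ≤ m) (a₀ M : ℝ) (ha₀ : 0 < a₀) (hM : a₀ ≤ M)
    (τ : ℝ) (hτ0 : 0 < τ) (hτ : τ < (M^2/(2*a₀) + M)⁻¹)
    (h a b c : ℕ → ℝ) (hh : ∀ i < m, 0 < h i)
    (ha : ∀ i < m, a₀ ≤ a i) (hb : ∀ i < m, |b i| ≤ M) (hc : ∀ i < m, |c i| ≤ M)
    (u : ℕ → ℝ)
    (hid : ∑ i ∈ Finset.range m, h i * a i * ((u (i+1) - u i)/h i)^2
          + (1/τ) * ∑ i ∈ Finset.range m, h i * (u i)^2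
        = ∑ i ∈ Finset.range m,
            h i * (b i * ((u (i+1) - u i)/h i) * u i + c i * (u i)^2)) :
    ∀ i ≤ m, u i = 0 :=
  stmt_10_general m hm a₀ M ha₀ τ hτ0 hτ h a b c hh ha hb hc u hid
end

section
/- Let m≥1 be an integer, a₀>0, M≥a₀, τ₀=(M²/(2a₀)+M)^{−1}, and 0<τ<τ₀. Let h₀,…,h_{m-1}>0 and reals a_i∈[a₀,M], |b_i|≤M, |c_i|≤M for i=0,…,m−1. Then for every choice of data w∈ℝ^{m+1}, f₀,…,f_{m-1}∈ℝ, and P,G∈ℝ, there exists a unique u∈ℝ^{m+1} such that for every η∈ℝ^{m+1}: ∑_{i=0}^{m-1} h_i·[a_i·u_{ix}·η_{ix} − b_i·u_{ix}·η_i − c_i·u_i·η_i + f_i·η_i + ((u_i−w_i)/τ)·η_i] + P·η_m + G·η₀ = 0, where u_{ix}=(u_{i+1}−u_i)/h_i and η_{ix}=(η_{i+1}−η_i)/h_i. -/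
/-!
The scheme is the variational equation `B(u, η) + ℓ(η) = 0 for all η` for a bilinear form `B` and a
linear functional `ℓ` on `ℝ^{m+1}`, so by finite dimensionality it suffices that `B(u, u) = 0`
forces `u = 0`. Young's inequality `b d v ≤ a₀ d²/2 + M² v²/(2a₀)` bounds each summand of `B(u, u)`
below by `h_i (a₀ d_i²/2 + κ u_i²)` with `κ = 1/τ - (M²/(2a₀) + M)`, and `κ > 0` exactly when
`τ < τ₀`; so `B(u, u) = 0` kills every `u_i` and every difference quotient `d_i`.
-/

namespace LinearMap.BilinForm

variable {K V : Type*} [Field K] [AddCommGroup V] [Module K V]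

theorem nondegenerate_of_anisotropic {B : LinearMap.BilinForm K V} (hB : ∀ u, B u u = 0 → u = 0) :
    B.Nondegenerate :=
  ⟨fun u hu => hB u (hu u), fun v hv => hB v (hv v)⟩

theorem existsUnique_add_eq_zero [FiniteDimensional K V] (B : LinearMap.BilinForm K V)
    (hB : B.Nondegenerate) (ℓ : Module.Dual K V) : ∃! u, ∀ η, B u η + ℓ η = 0 := by
  refine ⟨(B.toDual hB).symm (-ℓ), fun η => by simp, fun u hu => ?_⟩
  rw [LinearEquiv.eq_symm_apply]
  ext η
  exact eq_neg_of_add_eq_zero_left (hu η)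

end LinearMap.BilinForm

theorem local_coercivity {a₀ M τ a b c d v : ℝ} (ha₀ : 0 < a₀) (ha : a₀ ≤ a) (hb : |b| ≤ M)
    (hc : |c| ≤ M) :
    a₀ / 2 * d ^ 2 + (τ⁻¹ - (M ^ 2 / (2 * a₀) + M)) * v ^ 2
      ≤ a * d * d - b * d * v - c * v * v + v / τ * v := by
  have young : b * d * v ≤ a₀ / 2 * d ^ 2 + M ^ 2 / (2 * a₀) * v ^ 2 := by
    have hb2 : b ^ 2 ≤ M ^ 2 := sq_le_sq' (abs_le.mp hb).1 (abs_le.mp hb).2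
    rw [show a₀ / 2 * d ^ 2 + M ^ 2 / (2 * a₀) * v ^ 2 = (a₀ ^ 2 * d ^ 2 + M ^ 2 * v ^ 2) / (2 * a₀)
      by field_simp, le_div_iff₀ (by positivity)]
    nlinarith [sq_nonneg (a₀ * d - b * v), mul_le_mul_of_nonneg_right hb2 (sq_nonneg v)]
  have hA : a₀ * d ^ 2 ≤ a * d ^ 2 := mul_le_mul_of_nonneg_right ha (sq_nonneg d)
  have hC : c * v ^ 2 ≤ M * v ^ 2 := mul_le_mul_of_nonneg_right (abs_le.mp hc).2 (sq_nonneg v)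
  have hτ : v / τ * v = τ⁻¹ * v ^ 2 := by ring
  nlinarith

namespace ImplicitScheme

variable {m : ℕ}

noncomputable def bilinForm (τ : ℝ) (h a b c : Fin m → ℝ) :
    LinearMap.BilinForm ℝ (Fin (m + 1) → ℝ) :=
  LinearMap.mk₂ ℝ
    (fun u η => ∑ i : Fin m,
      h i * (a i * ((u i.succ - u i.castSucc) / h i) * ((η i.succ - η i.castSucc) / h i)
        - b i * ((u i.succ - u i.castSucc) / h i) * η i.castSucc
        - c i * u i.castSucc * η i.castSucc
        + u i.castSucc / τ * η i.castSucc))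
    (fun _ _ _ => by
      simp only [Pi.add_apply, ← Finset.sum_add_distrib]
      exact Finset.sum_congr rfl fun _ _ => by ring)
    (fun _ _ _ => by
      simp only [Pi.smul_apply, smul_eq_mul, Finset.mul_sum]
      exact Finset.sum_congr rfl fun _ _ => by ring)
    (fun _ _ _ => by
      simp only [Pi.add_apply, ← Finset.sum_add_distrib]
      exact Finset.sum_congr rfl fun _ _ => by ring)
    (fun _ _ _ => by
      simp only [Pi.smul_apply, smul_eq_mul, Finset.mul_sum]
      exact Finset.sum_congr rfl fun _ _ => by ring)

noncomputable def load (τ : ℝ) (h f : Fin m → ℝ) (w : Fin (m + 1) → ℝ) (P G : ℝ) :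
    Module.Dual ℝ (Fin (m + 1) → ℝ) where
  toFun η := ∑ i : Fin m, h i * (f i - w i.castSucc / τ) * η i.castSucc
    + P * η (Fin.last m) + G * η 0
  map_add' _ _ := by
    simp only [Pi.add_apply, mul_add, Finset.sum_add_distrib]
    ring
  map_smul' _ _ := by
    simp only [Pi.smul_apply, smul_eq_mul, RingHom.id_apply, mul_add, Finset.mul_sum]
    rw [Finset.sum_congr rfl fun _ _ => mul_left_comm _ _ _]
    ring

theorem sum_eq_bilinForm_add_load (τ : ℝ) (h a b c f : Fin m → ℝ) (w : Fin (m + 1) → ℝ)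
    (P G : ℝ) (u η : Fin (m + 1) → ℝ) :
    ∑ i : Fin m,
        h i * (a i * ((u i.succ - u i.castSucc) / h i) * ((η i.succ - η i.castSucc) / h i)
          - b i * ((u i.succ - u i.castSucc) / h i) * η i.castSucc
          - c i * u i.castSucc * η i.castSucc
          + f i * η i.castSucc
          + ((u i.castSucc - w i.castSucc) / τ) * η i.castSucc)
      + P * η (Fin.last m) + G * η 0
      = bilinForm τ h a b c u η + load τ h f w P G η := by
  simp only [bilinForm, load, LinearMap.mk₂_apply, LinearMap.coe_mk, AddHom.coe_mk]
  rw [← add_assoc, ← add_assoc, ← Finset.sum_add_distrib]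
  congr 2
  exact Finset.sum_congr rfl fun _ _ => by ring


theorem bilinForm_self_eq_zero (hm : 1 ≤ m) {a₀ M τ : ℝ} (ha₀ : 0 < a₀) (hτ0 : 0 < τ)
    (hτ : τ < (M ^ 2 / (2 * a₀) + M)⁻¹) {h a b c : Fin m → ℝ} (hh : ∀ i, 0 < h i)
    (ha : ∀ i, a₀ ≤ a i) (hb : ∀ i, |b i| ≤ M) (hc : ∀ i, |c i| ≤ M) {u : Fin (m + 1) → ℝ}
    (hu : bilinForm τ h a b c u u = 0) : u = 0 := by
  set κ := τ⁻¹ - (M ^ 2 / (2 * a₀) + M)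
  have hκ : 0 < κ := by
    have hX : 0 < M ^ 2 / (2 * a₀) + M := inv_pos.mp (hτ0.trans hτ)
    linarith [(lt_inv_comm₀ hτ0 hX).mp hτ]
  let energy (i : Fin m) : ℝ :=
    h i * (a₀ / 2 * ((u i.succ - u i.castSucc) / h i) ^ 2 + κ * u i.castSucc ^ 2)
  have energy_nonneg (i : Fin m) : 0 ≤ energy i := by
    have := hh i
    positivity
  have energy_eq_zero : ∀ i ∈ Finset.univ, energy i = 0 := by
    refine (Finset.sum_eq_zero_iff_of_nonneg fun i _ => energy_nonneg i).mp (le_antisymm ?_ ?_)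
    · rw [← hu]
      exact Finset.sum_le_sum fun i _ =>
        mul_le_mul_of_nonneg_left (local_coercivity ha₀ (ha i) (hb i) (hc i)) (hh i).le
    · exact Finset.sum_nonneg fun i _ => energy_nonneg i
  have hvanish (i : Fin m) : u i.castSucc = 0 ∧ u i.succ = 0 := by
    have hi := energy_eq_zero i (Finset.mem_univ i)
    simp only [energy, mul_eq_zero, (hh i).ne', false_or] at hi
    obtain ⟨hd, hv⟩ := (add_eq_zero_iff_of_nonneg (by positivity) (by positivity)).mp hi
    simp only [mul_eq_zero, hκ.ne', ha₀.ne', div_eq_zero_iff, pow_eq_zero_iff two_ne_zero,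
      sub_eq_zero, (hh i).ne', false_or, or_false, OfNat.ofNat_ne_zero] at hd hv
    exact ⟨hv, hd.trans hv⟩
  funext j
  refine Fin.cases ?_ (fun i => (hvanish i).2) j
  exact (hvanish ⟨0, hm⟩).1

end ImplicitScheme

open ImplicitScheme in
theorem stmt_11_general (m : ℕ) (hm : 1 ≤ m) (a₀ M : ℝ) (ha₀ : 0 < a₀)
    (τ : ℝ) (hτ0 : 0 < τ) (hτ : τ < (M^2/(2*a₀) + M)⁻¹)
    (h a b c f : Fin m → ℝ) (hh : ∀ i, 0 < h i)
    (ha : ∀ i, a i ∈ Set.Icc a₀ M) (hb : ∀ i, |b i| ≤ M) (hc : ∀ i, |c i| ≤ M)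
    (w : Fin (m+1) → ℝ) (P G : ℝ) :
    ∃! u : Fin (m+1) → ℝ, ∀ η : Fin (m+1) → ℝ,
      ∑ i : Fin m,
        h i * (a i * ((u i.succ - u i.castSucc)/h i) * ((η i.succ - η i.castSucc)/h i)
          - b i * ((u i.succ - u i.castSucc)/h i) * η i.castSucc
          - c i * u i.castSucc * η i.castSucc
          + f i * η i.castSucc
          + ((u i.castSucc - w i.castSucc)/τ) * η i.castSucc)
      + P * η (Fin.last m) + G * η 0 = 0 := by
  have hB : (bilinForm τ h a b c).Nondegenerate :=
    LinearMap.BilinForm.nondegenerate_of_anisotropic fun _ =>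
      bilinForm_self_eq_zero hm ha₀ hτ0 hτ hh (fun i => (ha i).1) hb hc
  simpa only [sum_eq_bilinForm_add_load] using
    (bilinForm τ h a b c).existsUnique_add_eq_zero hB (load τ h f w P G)

/-- Lemma 2.1: unique solvability of the discrete scheme at each time step,
expressed through the summation identity (1.17), for time steps below the threshold
`τ₀ = (M²/(2a₀)+M)⁻¹`. -/
theorem stmt_11 (m : ℕ) (hm : 1 ≤ m) (a₀ M : ℝ) (ha₀ : 0 < a₀) (hM : a₀ ≤ M)
    (τ : ℝ) (hτ0 : 0 < τ) (hτ : τ < (M^2/(2*a₀) + M)⁻¹)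
    (h a b c f : Fin m → ℝ) (hh : ∀ i, 0 < h i)
    (ha : ∀ i, a i ∈ Set.Icc a₀ M) (hb : ∀ i, |b i| ≤ M) (hc : ∀ i, |c i| ≤ M)
    (w : Fin (m+1) → ℝ) (P G : ℝ) :
    ∃! u : Fin (m+1) → ℝ, ∀ η : Fin (m+1) → ℝ,
      ∑ i : Fin m,
        h i * (a i * ((u i.succ - u i.castSucc)/h i) * ((η i.succ - η i.castSucc)/h i)
          - b i * ((u i.succ - u i.castSucc)/h i) * η i.castSucc
          - c i * u i.castSucc * η i.castSucc
          + f i * η i.castSucc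
          + ((u i.castSucc - w i.castSucc)/τ) * η i.castSucc)
      + P * η (Fin.last m) + G * η 0 = 0 :=
  stmt_11_general m hm a₀ M ha₀ τ hτ0 hτ h a b c f hh ha hb hc w P G
end

section
/- Let 0<δ≤l. There exists a constant C>0 depending only on δ and l such that for every integer m≥1, every choice of h₀,…,h_{m-1}>0 with δ ≤ ∑_{i=0}^{m-1}h_i ≤ l, and every u∈ℝ^{m+1}, one has max_{0≤i≤m} u_i² ≤ C·∑_{i=0}^{m-1} h_i·(u_i² + u_{ix}²), where u_{ix}=(u_{i+1}−u_i)/h_i. -/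
/-!
Some node `k < m` has `u_k²` at most the `h`-weighted mean of `u₀², …, u_{m-1}²`; as the weights
add up to at least `δ`, this gives `δ u_k² ≤ ∑ hⱼ uⱼ²`. For any node `i`, `u_i - u_k` telescopes into increments
`uⱼ₊₁ - uⱼ = hⱼ · u_{jx}`, and Cauchy–Schwarz bounds the square of their total variation by
`(∑ hⱼ) ∑ hⱼ u_{jx}² ≤ l ∑ hⱼ u_{jx}²`. Finally `u_i² ≤ 2 u_k² + 2 (u_i - u_k)²`,
so `C = 2/δ + 2l` works.
-/

open Finset

lemma dist_le_sum_range_dist {α : Type*} [PseudoMetricSpace α] (u : ℕ → α) {i k m : ℕ}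
    (hi : i ≤ m) (hk : k ≤ m) :
    dist (u i) (u k) ≤ ∑ j ∈ range m, dist (u j) (u (j + 1)) := by
  wlog hik : i ≤ k generalizing i k
  · rw [dist_comm]
    exact this hk hi (le_of_not_ge hik)
  calc dist (u i) (u k) ≤ ∑ j ∈ Ico i k, dist (u j) (u (j + 1)) := dist_le_Ico_sum_dist u hik
    _ ≤ ∑ j ∈ range m, dist (u j) (u (j + 1)) :=
        sum_le_sum_of_subset_of_nonneg
          (fun j hj => mem_range.2 ((mem_Ico.1 hj).2.trans_le hk))
          (fun _ _ _ => dist_nonneg)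

lemma exists_sum_mul_le_sum_mul {ι : Type*} {s : Finset ι} (hs : s.Nonempty) {w f : ι → ℝ}
    (hw : ∀ j ∈ s, 0 ≤ w j) :
    ∃ k ∈ s, (∑ j ∈ s, w j) * f k ≤ ∑ j ∈ s, w j * f j := by
  obtain ⟨k, hk, hmin⟩ := exists_min_image s f hs
  exact ⟨k, hk, sum_mul s w (f k) ▸
    sum_le_sum fun j hj => mul_le_mul_of_nonneg_left (hmin j hj) (hw j hj)⟩

lemma sq_sub_le_sum_mul_sum_sq_div {m : ℕ} {h : ℕ → ℝ} (hpos : ∀ j < m, 0 < h j) (u : ℕ → ℝ)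
    {i k : ℕ} (hi : i ≤ m) (hk : k ≤ m) :
    (u i - u k) ^ 2 ≤
      (∑ j ∈ range m, h j) * ∑ j ∈ range m, h j * ((u (j + 1) - u j) / h j) ^ 2 := by
  have hvar : |u i - u k| ≤ ∑ j ∈ range m, |u (j + 1) - u j| := by
    simpa only [Real.dist_eq, abs_sub_comm (u _) (u (_ + 1))] using dist_le_sum_range_dist u hi hk
  have hcs : (∑ j ∈ range m, |u (j + 1) - u j|) ^ 2 ≤
      (∑ j ∈ range m, h j) * ∑ j ∈ range m, h j * ((u (j + 1) - u j) / h j) ^ 2 := by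
    refine sum_sq_le_sum_mul_sum_of_sq_le_mul _ (fun j hj => (hpos j (mem_range.1 hj)).le)
      (fun j hj => by have := hpos j (mem_range.1 hj); positivity) fun j hj => le_of_eq ?_
    have := (hpos j (mem_range.1 hj)).ne'
    rw [sq_abs]
    field_simp
  calc (u i - u k) ^ 2 = |u i - u k| ^ 2 := (sq_abs _).symm
    _ ≤ (∑ j ∈ range m, |u (j + 1) - u j|) ^ 2 := pow_le_pow_left₀ (abs_nonneg _) hvar 2
    _ ≤ _ := hcs

/-- the discrete Morrey-type inequality (3.4), on grids of total length
between `δ` and `l`. -/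
theorem stmt_12 (δ l : ℝ) (hδ : 0 < δ) (hδl : δ ≤ l) :
    ∃ C > (0:ℝ), ∀ m : ℕ, 1 ≤ m → ∀ h : ℕ → ℝ, (∀ i < m, 0 < h i) →
      δ ≤ ∑ i ∈ Finset.range m, h i → (∑ i ∈ Finset.range m, h i) ≤ l →
      ∀ u : ℕ → ℝ, ∀ i ≤ m,
        (u i)^2 ≤ C * ∑ j ∈ Finset.range m, h j * ((u j)^2 + ((u (j+1) - u j)/h j)^2) := by
  have hl : 0 < l := hδ.trans_le hδl
  refine ⟨2 / δ + 2 * l, by positivity, fun m hm h hpos hδs hsl u i hi => ?_⟩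
  set S₀ := ∑ j ∈ range m, h j * u j ^ 2
  set S₁ := ∑ j ∈ range m, h j * ((u (j + 1) - u j) / h j) ^ 2
  have hS₀ : 0 ≤ S₀ := sum_nonneg fun j hj => by have := hpos j (mem_range.1 hj); positivity
  have hS₁ : 0 ≤ S₁ := sum_nonneg fun j hj => by have := hpos j (mem_range.1 hj); positivity
  obtain ⟨k, hk, hmean⟩ := exists_sum_mul_le_sum_mul (f := fun j => u j ^ 2)
    (nonempty_range_iff.2 (by omega)) fun j hj => (hpos j (mem_range.1 hj)).le
  have hmin : u k ^ 2 ≤ S₀ / δ := by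
    rw [le_div_iff₀ hδ, mul_comm]
    exact (mul_le_mul_of_nonneg_right hδs (sq_nonneg _)).trans hmean
  have hosc : (u i - u k) ^ 2 ≤ l * S₁ :=
    (sq_sub_le_sum_mul_sum_sq_div hpos u hi (mem_range.1 hk).le).trans
      (mul_le_mul_of_nonneg_right hsl hS₁)
  have hsplit : u i ^ 2 ≤ 2 * u k ^ 2 + 2 * (u i - u k) ^ 2 := by
    nlinarith [sq_nonneg (u i - 2 * u k)]
  have hsum : ∑ j ∈ range m, h j * (u j ^ 2 + ((u (j + 1) - u j) / h j) ^ 2) = S₀ + S₁ := by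
    rw [← sum_add_distrib]
    exact sum_congr rfl fun j _ => mul_add _ _ _
  rw [hsum]
  calc u i ^ 2 ≤ 2 / δ * S₀ + 2 * l * S₁ := by
        have : 2 * (S₀ / δ) = 2 / δ * S₀ := by ring
        linarith
    _ ≤ (2 / δ + 2 * l) * (S₀ + S₁) := by
        have : 0 ≤ 2 / δ := by positivity
        nlinarith
end

section
/- Let a₀>0, M≥a₀, and 0<δ≤l. There exists a constant C₁>0 depending only on a₀, M, δ, l such that the following holds. Let τ>0, m≥1, h₀,…,h_{m-1}>0 with δ ≤ ∑_{i<m}h_i ≤ l, reals a_i∈[a₀,M], |b_i|≤M, |c_i|≤M, f_i∈ℝ (i=0,…,m−1), P,G∈ℝ, and w∈ℝ^{m+1}. If u∈ℝ^{m+1} satisfies, for every η∈ℝ^{m+1}, ∑_{i=0}^{m-1} h_i·[a_i·u_{ix}·η_{ix} − b_i·u_{ix}·η_i − c_i·u_i·η_i + f_i·η_i + ((u_i−w_i)/τ)·η_i] + P·η_m + G·η₀ = 0 (with u_{ix}=(u_{i+1}−u_i)/h_i, η_{ix}=(η_{i+1}−η_i)/h_i), then ∑_{i<m}h_i·u_i²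 − ∑_{i<m}h_i·w_i² + a₀·τ·∑_{i<m}h_i·u_{ix}² + τ²·∑_{i<m}h_i·((u_i−w_i)/τ)² ≤ C₁·τ·[P² + G² + ∑_{i<m}h_i·f_i² + ∑_{i<m}h_i·u_i²]. -/
/-!
Test the scheme with `η = u`. By `2 (u - w) u = u² - w² + (u - w)²`, `2τ` times the
time-difference term is the left-hand side without the gradient term, while the
diffusion term gives at least `a₀ ∑ hᵢ uᵢₓ²`. The drift, reaction and source terms are absorbed by
Young's inequality into a quarter of that gradient term plus multiples of `∑ hᵢ uᵢ²` and
`∑ hᵢ fᵢ²`. The boundary terms `P u_m`, `G u₀` need point values of `u`: by the discrete Morrey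
inequality `u_j² ≤ 2 ∑ hᵢuᵢ² / ∑ hᵢ + 2 (∑ hᵢ) ∑ hᵢuᵢₓ²`, which holds because some `u_k²` lies
below the weighted mean and `|u_j - u_k|` is controlled by a telescoping sum and Cauchy–Schwarz.
With `δ ≤ ∑ hᵢ ≤ l` and a small Young parameter they cost another quarter of the gradient term.
-/

open Finset

theorem dist_le_range_sum_dist_of_le {α : Type*} [PseudoMetricSpace α] (u : ℕ → α)
    {m j k : ℕ} (hj : j ≤ m) (hk : k ≤ m) :
    dist (u j) (u k) ≤ ∑ i ∈ range m, dist (u i) (u (i + 1)) := by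
  wlog hjk : j ≤ k generalizing j k
  · rw [dist_comm]
    exact this hk hj (le_of_not_ge hjk)
  calc dist (u j) (u k) ≤ ∑ i ∈ Ico j k, dist (u i) (u (i + 1)) := dist_le_Ico_sum_dist u hjk
    _ ≤ ∑ i ∈ range m, dist (u i) (u (i + 1)) :=
      sum_le_sum_of_subset_of_nonneg
        (fun i hi => mem_range.2 ((mem_Ico.1 hi).2.trans_le hk)) fun _ _ _ => dist_nonneg

section Grid

variable {m : ℕ} {h : ℕ → ℝ}

theorem sq_sum_dist_le_sum_mul_sum_sq_div (hh : ∀ i < m, 0 < h i) (u : ℕ → ℝ) :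
    (∑ i ∈ range m, dist (u i) (u (i + 1))) ^ 2
      ≤ (∑ i ∈ range m, h i) * ∑ i ∈ range m, h i * ((u (i + 1) - u i) / h i) ^ 2 := by
  refine sum_sq_le_sum_mul_sum_of_sq_le_mul _ (fun i hi => (hh i (mem_range.1 hi)).le)
    (fun i hi => mul_nonneg (hh i (mem_range.1 hi)).le (sq_nonneg _)) fun i hi => le_of_eq ?_
  have := (hh i (mem_range.1 hi)).ne'
  rw [Real.dist_eq, sq_abs]
  field_simp
  ring

theorem exists_sq_le_weighted_mean (hm : 0 < m) (hh : ∀ i < m, 0 < h i) (u : ℕ → ℝ) :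
    ∃ k < m, u k ^ 2 ≤ (∑ i ∈ range m, h i * u i ^ 2) / ∑ i ∈ range m, h i := by
  have hne : (range m).Nonempty := nonempty_range_iff.2 hm.ne'
  have hH : 0 < ∑ i ∈ range m, h i := sum_pos (fun i hi => hh i (mem_range.1 hi)) hne
  obtain ⟨k, hk, hle⟩ := exists_le_of_sum_le hne (f := fun i => h i * u i ^ 2)
    (g := fun i => h i * ((∑ i ∈ range m, h i * u i ^ 2) / ∑ i ∈ range m, h i))
    (by rw [← sum_mul, mul_div_cancel₀ _ hH.ne'])
  exact ⟨k, mem_range.1 hk, le_of_mul_le_mul_left hle (hh k (mem_range.1 hk))⟩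

theorem sq_le_discrete_morrey (hm : 0 < m) (hh : ∀ i < m, 0 < h i) (u : ℕ → ℝ) {j : ℕ}
    (hj : j ≤ m) :
    u j ^ 2 ≤ 2 * ((∑ i ∈ range m, h i * u i ^ 2) / ∑ i ∈ range m, h i)
      + 2 * ((∑ i ∈ range m, h i) * ∑ i ∈ range m, h i * ((u (i + 1) - u i) / h i) ^ 2) := by
  obtain ⟨k, hk, hk_small⟩ := exists_sq_le_weighted_mean hm hh u
  have hjk : (u j - u k) ^ 2
      ≤ (∑ i ∈ range m, h i) * ∑ i ∈ range m, h i * ((u (i + 1) - u i) / h i) ^ 2 :=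
    calc (u j - u k) ^ 2 = dist (u j) (u k) ^ 2 := by rw [Real.dist_eq, sq_abs]
      _ ≤ (∑ i ∈ range m, dist (u i) (u (i + 1))) ^ 2 :=
        pow_le_pow_left₀ dist_nonneg (dist_le_range_sum_dist_of_le u hj hk.le) 2
      _ ≤ _ := sq_sum_dist_le_sum_mul_sum_sq_div hh u
  calc u j ^ 2 = (u k + (u j - u k)) ^ 2 := by ring
    _ ≤ 2 * (u k ^ 2 + (u j - u k) ^ 2) := add_sq_le
    _ ≤ _ := by linarith

theorem mul_le_mul_sq_add_sq_div {ε : ℝ} (hε : 0 < ε) (x y : ℝ) :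
    x * y ≤ ε * x ^ 2 + y ^ 2 / (4 * ε) := by
  have hsq : ε * x ^ 2 + y ^ 2 / (4 * ε) - x * y = (2 * ε * x - y) ^ 2 / (4 * ε) := by
    field_simp
    ring
  have : 0 ≤ (2 * ε * x - y) ^ 2 / (4 * ε) := by positivity
  linarith

theorem mul_sum_sq_le_sum_mul_sq {a₀ : ℝ} (hh : ∀ i < m, 0 < h i) {a : ℕ → ℝ}
    (ha : ∀ i < m, a₀ ≤ a i) (v : ℕ → ℝ) :
    a₀ * ∑ i ∈ range m, h i * v i ^ 2 ≤ ∑ i ∈ range m, h i * (a i * v i * v i) := by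
  rw [mul_sum]
  refine sum_le_sum fun i hi => ?_
  have hi := mem_range.1 hi
  calc a₀ * (h i * v i ^ 2) = h i * (a₀ * v i ^ 2) := by ring
    _ ≤ h i * (a i * v i ^ 2) :=
      mul_le_mul_of_nonneg_left (mul_le_mul_of_nonneg_right (ha i hi) (sq_nonneg _)) (hh i hi).le
    _ = h i * (a i * v i * v i) := by ring

theorem sum_mul_mul_le_of_abs_le {a₀ M : ℝ} (ha₀ : 0 < a₀) (hh : ∀ i < m, 0 < h i) {b : ℕ → ℝ}
    (hb : ∀ i < m, |b i| ≤ M) (v u : ℕ → ℝ) :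
    ∑ i ∈ range m, h i * (b i * v i * u i)
      ≤ a₀ / 4 * ∑ i ∈ range m, h i * v i ^ 2 + M ^ 2 / a₀ * ∑ i ∈ range m, h i * u i ^ 2 := by
  rw [mul_sum, mul_sum, ← sum_add_distrib]
  refine sum_le_sum fun i hi => ?_
  have hi := mem_range.1 hi
  have hbvu : b i * v i * u i ≤ a₀ / 4 * v i ^ 2 + M ^ 2 / a₀ * u i ^ 2 :=
    calc b i * v i * u i ≤ |b i| * |v i| * |u i| := by
          rw [← abs_mul, ← abs_mul]
          exact le_abs_self _
      _ ≤ M * |v i| * |u i| := by gcongr; exact hb i hi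
      _ = |v i| * (M * |u i|) := by ring
      _ ≤ a₀ / 4 * |v i| ^ 2 + (M * |u i|) ^ 2 / (4 * (a₀ / 4)) :=
        mul_le_mul_sq_add_sq_div (by positivity) _ _
      _ = a₀ / 4 * v i ^ 2 + M ^ 2 / a₀ * u i ^ 2 := by
        rw [sq_abs, mul_pow, sq_abs]; field_simp
  calc h i * (b i * v i * u i) ≤ h i * (a₀ / 4 * v i ^ 2 + M ^ 2 / a₀ * u i ^ 2) :=
        mul_le_mul_of_nonneg_left hbvu (hh i hi).le
    _ = _ := by ring

theorem sum_mul_mul_self_le_of_abs_le {M : ℝ} (hh : ∀ i < m, 0 < h i) {c : ℕ → ℝ}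
    (hc : ∀ i < m, |c i| ≤ M) (u : ℕ → ℝ) :
    ∑ i ∈ range m, h i * (c i * u i * u i) ≤ M * ∑ i ∈ range m, h i * u i ^ 2 := by
  rw [mul_sum]
  refine sum_le_sum fun i hi => ?_
  have hi := mem_range.1 hi
  calc h i * (c i * u i * u i) = h i * (c i * u i ^ 2) := by ring
    _ ≤ h i * (M * u i ^ 2) := by
      gcongr
      · exact (hh i hi).le
      · exact (le_abs_self _).trans (hc i hi)
    _ = M * (h i * u i ^ 2) := by ring

theorem neg_sum_mul_le (hh : ∀ i < m, 0 < h i) (f u : ℕ → ℝ) :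
    -∑ i ∈ range m, h i * (f i * u i)
      ≤ (∑ i ∈ range m, h i * f i ^ 2 + ∑ i ∈ range m, h i * u i ^ 2) / 2 := by
  rw [← sum_add_distrib, sum_div, ← sum_neg_distrib]
  refine sum_le_sum fun i hi => ?_
  have := (hh i (mem_range.1 hi)).le
  nlinarith [mul_nonneg this (sq_nonneg (f i + u i))]

theorem two_mul_sum_sub_div_mul_eq {τ : ℝ} (hτ : τ ≠ 0) (u w : ℕ → ℝ) :
    2 * τ * ∑ i ∈ range m, h i * ((u i - w i) / τ * u i)
      = ∑ i ∈ range m, h i * u i ^ 2 - ∑ i ∈ range m, h i * w i ^ 2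
        + τ ^ 2 * ∑ i ∈ range m, h i * ((u i - w i) / τ) ^ 2 := by
  simp only [mul_sum, ← sum_sub_distrib, ← sum_add_distrib]
  refine sum_congr rfl fun i _ => ?_
  field_simp
  ring

theorem neg_mul_le_of_discrete_morrey {a₀ δ l : ℝ} (ha₀ : 0 < a₀) (hδ : 0 < δ) (hm : 0 < m)
    (hh : ∀ i < m, 0 < h i) (hδs : δ ≤ ∑ i ∈ range m, h i) (hsl : ∑ i ∈ range m, h i ≤ l)
    (u : ℕ → ℝ) {j : ℕ} (hj : j ≤ m) (P : ℝ) :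
    -(P * u j) ≤ a₀ / 8 * ∑ i ∈ range m, h i * ((u (i + 1) - u i) / h i) ^ 2
      + a₀ / (8 * l * δ) * ∑ i ∈ range m, h i * u i ^ 2 + 4 * l / a₀ * P ^ 2 := by
  set S := ∑ i ∈ range m, h i * u i ^ 2
  set Sx := ∑ i ∈ range m, h i * ((u (i + 1) - u i) / h i) ^ 2
  have hl : 0 < l := hδ.trans_le (hδs.trans hsl)
  have hS : 0 ≤ S := sum_nonneg fun i hi => mul_nonneg (hh i (mem_range.1 hi)).le (sq_nonneg _)
  have hSx : 0 ≤ Sx := sum_nonneg fun i hi => mul_nonneg (hh i (mem_range.1 hi)).le (sq_nonneg _)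
  have hmean : S / ∑ i ∈ range m, h i ≤ S / δ := div_le_div_of_nonneg_left hS hδ hδs
  have hlength : (∑ i ∈ range m, h i) * Sx ≤ l * Sx := mul_le_mul_of_nonneg_right hsl hSx
  have hε : 0 < a₀ / (16 * l) := by positivity
  calc -(P * u j) = u j * -P := by ring
    _ ≤ a₀ / (16 * l) * u j ^ 2 + (-P) ^ 2 / (4 * (a₀ / (16 * l))) :=
      mul_le_mul_sq_add_sq_div hε _ _
    _ ≤ a₀ / (16 * l) * (2 * (S / δ) + 2 * (l * Sx)) + (-P) ^ 2 / (4 * (a₀ / (16 * l))) := by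
      gcongr
      linarith [sq_le_discrete_morrey hm hh u hj]
    _ = _ := by
      field_simp
      ring

theorem energy_le_of_test_self {a₀ M δ l P G : ℝ} (ha₀ : 0 < a₀) (hδ : 0 < δ) (hm : 0 < m)
    (hh : ∀ i < m, 0 < h i) (hδs : δ ≤ ∑ i ∈ range m, h i) (hsl : ∑ i ∈ range m, h i ≤ l)
    {a b c f g u : ℕ → ℝ} (ha : ∀ i < m, a₀ ≤ a i) (hb : ∀ i < m, |b i| ≤ M)
    (hc : ∀ i < m, |c i| ≤ M)
    (htested : ∑ i ∈ range m,
        h i * (a i * ((u (i + 1) - u i) / h i) * ((u (i + 1) - u i) / h i)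
          - b i * ((u (i + 1) - u i) / h i) * u i - c i * u i * u i + f i * u i + g i * u i)
      + P * u m + G * u 0 = 0) :
    ∑ i ∈ range m, h i * (g i * u i)
        + a₀ / 2 * ∑ i ∈ range m, h i * ((u (i + 1) - u i) / h i) ^ 2
      ≤ (M ^ 2 / a₀ + M + 1 + a₀ / (4 * l * δ) + 4 * l / a₀)
        * (P ^ 2 + G ^ 2 + ∑ i ∈ range m, h i * f i ^ 2 + ∑ i ∈ range m, h i * u i ^ 2) := by
  simp only [mul_add, mul_sub, sum_add_distrib, sum_sub_distrib] at htested
  have hdiff := mul_sum_sq_le_sum_mul_sq hh ha fun i => (u (i + 1) - u i) / h i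
  have hdrift := sum_mul_mul_le_of_abs_le ha₀ hh hb (fun i => (u (i + 1) - u i) / h i) u
  have hreact := sum_mul_mul_self_le_of_abs_le hh hc u
  have hsrc := neg_sum_mul_le hh f u
  have hright := neg_mul_le_of_discrete_morrey ha₀ hδ hm hh hδs hsl u le_rfl P
  have hleft := neg_mul_le_of_discrete_morrey ha₀ hδ hm hh hδs hsl u (Nat.zero_le m) G
  beta_reduce at hdiff hdrift
  set S := ∑ i ∈ range m, h i * u i ^ 2
  set Sf := ∑ i ∈ range m, h i * f i ^ 2
  have hS : 0 ≤ S := sum_nonneg fun i hi => mul_nonneg (hh i (mem_range.1 hi)).le (sq_nonneg _)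
  have hSf : 0 ≤ Sf := sum_nonneg fun i hi => mul_nonneg (hh i (mem_range.1 hi)).le (sq_nonneg _)
  have hl : 0 < l := hδ.trans_le (hδs.trans hsl)
  have hM : 0 ≤ M := (abs_nonneg _).trans (hb 0 hm)
  -- the coercivity `a₀` is spent as `a₀/4` (drift) `+ a₀/8 + a₀/8` (endpoints) `+ a₀/2` (kept)
  set K := M ^ 2 / a₀ + M + 1 + a₀ / (4 * l * δ) + 4 * l / a₀ with hK
  have h₁ : 0 ≤ M ^ 2 / a₀ := by positivity
  have h₂ : 2 * (a₀ / (8 * l * δ)) = a₀ / (4 * l * δ) := by field_simp; ring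
  have h₃ : 0 < a₀ / (4 * l * δ) := by positivity
  have h₄ : 0 < 4 * l / a₀ := by positivity
  have hcS : (M ^ 2 / a₀ + M + 1 / 2 + 2 * (a₀ / (8 * l * δ))) * S ≤ K * S :=
    mul_le_mul_of_nonneg_right (by linarith) hS
  have hcSf : 1 / 2 * Sf ≤ K * Sf := mul_le_mul_of_nonneg_right (by linarith) hSf
  have hcP : 4 * l / a₀ * P ^ 2 ≤ K * P ^ 2 := mul_le_mul_of_nonneg_right (by linarith) (sq_nonneg _)
  have hcG : 4 * l / a₀ * G ^ 2 ≤ K * G ^ 2 := mul_le_mul_of_nonneg_right (by linarith) (sq_nonneg _)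
  linarith

end Grid

/-- the one-step first energy estimate (3.5) for the discrete scheme. -/
theorem stmt_13 (a₀ M δ l : ℝ) (ha₀ : 0 < a₀) (hM : a₀ ≤ M) (hδ : 0 < δ) (hδl : δ ≤ l) :
    ∃ C₁ > (0:ℝ), ∀ τ : ℝ, 0 < τ → ∀ m : ℕ, 1 ≤ m →
      ∀ h a b c f : ℕ → ℝ, (∀ i < m, 0 < h i) →
      δ ≤ ∑ i ∈ Finset.range m, h i → (∑ i ∈ Finset.range m, h i) ≤ l →
      (∀ i < m, a i ∈ Set.Icc a₀ M) → (∀ i < m, |b i| ≤ M) → (∀ i < m, |c i| ≤ M) →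
      ∀ P G : ℝ, ∀ w u : ℕ → ℝ,
      (∀ η : ℕ → ℝ,
        ∑ i ∈ Finset.range m,
          h i * (a i * ((u (i+1) - u i)/h i) * ((η (i+1) - η i)/h i)
            - b i * ((u (i+1) - u i)/h i) * η i
            - c i * u i * η i
            + f i * η i
            + ((u i - w i)/τ) * η i)
        + P * η m + G * η 0 = 0) →
      ∑ i ∈ Finset.range m, h i * (u i)^2 - ∑ i ∈ Finset.range m, h i * (w i)^2
        + a₀ * τ * ∑ i ∈ Finset.range m, h i * ((u (i+1) - u i)/h i)^2
        + τ^2 * ∑ i ∈ Finset.range m, h i * ((u i - w i)/τ)^2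
      ≤ C₁ * τ * (P^2 + G^2 + ∑ i ∈ Finset.range m, h i * (f i)^2
          + ∑ i ∈ Finset.range m, h i * (u i)^2) := by
  have hl : 0 < l := hδ.trans_le hδl
  have hM0 : 0 < M := ha₀.trans_le hM
  refine ⟨2 * (M ^ 2 / a₀ + M + 1 + a₀ / (4 * l * δ) + 4 * l / a₀), by positivity,
    fun τ hτ m hm h a b c f hh hδs hsl ha hb hc P G w u H => ?_⟩
  have henergy := energy_le_of_test_self ha₀ hδ hm hh hδs hsl (fun i hi => (ha i hi).1) hb hc
    (g := fun i => (u i - w i) / τ) (H u)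
  calc _ = 2 * τ * (∑ i ∈ range m, h i * ((u i - w i) / τ * u i)
        + a₀ / 2 * ∑ i ∈ range m, h i * ((u (i + 1) - u i) / h i) ^ 2) := by
        rw [mul_add, two_mul_sum_sub_div_mul_eq hτ.ne']; ring
    _ ≤ _ := by linarith [mul_le_mul_of_nonneg_left henergy (by positivity : (0 : ℝ) ≤ 2 * τ)]
end

section
/- Let τ>0, let 0≤m'≤m be integers with m≥1, let h₀,…,h_{m-1}>0, and set L=∑_{i=m'}^{m-1} h_i. Let w∈ℝ^{m+1} and define w̃∈ℝ^{m+1} by w̃_i=w_i for i≤m' and w̃_i=w_{m'} for i>m'. Let v∈ℝ^{m+1} and set u_{t̄,i}=(v_i−w_i)/τ, ũ_{t̄,i}=(v_i−w̃_i)/τ, and w_{ix}=(w_{i+1}−w_i)/h_i. Then 2τ·∑_{i=0}^{m-1} h_i·u_{t̄,i}·ũ_{t̄,i} ≥ τ·∑_{i=0}^{m-1} h_i·ũ_{t̄,i}² − (L²/τ)·∑_{i=m'}^{m-1} h_i·w_{ix}². -/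
/-- inequality (3.40), bounding from below the cross term of the two backward
difference quotients when the previous time layer `w` is replaced by its constant
continuation `w̃` beyond index `m'`. -/
theorem stmt_14 (τ : ℝ) (hτ : 0 < τ) (m m' : ℕ) (hm : 1 ≤ m) (hm' : m' ≤ m)
    (h : ℕ → ℝ) (hh : ∀ i < m, 0 < h i) (w v : ℕ → ℝ)
    (L : ℝ) (hL : L = ∑ i ∈ Finset.Ico m' m, h i)
    (wt : ℕ → ℝ) (hwt : ∀ i, wt i = if i ≤ m' then w i else w m') :
    2*τ * ∑ i ∈ Finset.range m, h i * ((v i - w i)/τ) * ((v i - wt i)/τ)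
      ≥ τ * ∑ i ∈ Finset.range m, h i * ((v i - wt i)/τ)^2
        - (L^2/τ) * ∑ i ∈ Finset.Ico m' m, h i * ((w (i+1) - w i)/h i)^2 := by
  set S : ℝ := ∑ i ∈ Finset.Ico m' m, h i * ((w (i+1) - w i)/h i)^2 with hS
  have hSnn : 0 ≤ S := by
    apply Finset.sum_nonneg
    intro i hi
    exact mul_nonneg (hh i (Finset.mem_Ico.1 hi).2).le (sq_nonneg _)
  have hLnn : 0 ≤ L := by
    rw [hL]
    exact Finset.sum_nonneg fun i hi => (hh i (Finset.mem_Ico.1 hi).2).le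
  -- Key: for m' ≤ i ≤ m, (w i - w m')^2 ≤ L * S, by telescoping and Cauchy–Schwarz
  have key : ∀ i, m' ≤ i → i ≤ m → (w i - w m')^2 ≤ L * S := by
    intro i hmi him
    have tel : w i - w m' = ∑ p ∈ Finset.Ico m' i, (w (p+1) - w p) := by
      rw [Finset.sum_Ico_eq_sub _ hmi, Finset.sum_range_sub, Finset.sum_range_sub]
      ring
    have tel2 : w i - w m'
        = ∑ p ∈ Finset.Ico m' i, h p * ((w (p+1) - w p)/h p) := by
      rw [tel]
      apply Finset.sum_congr rfl
      intro p hp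
      have hppos : 0 < h p := hh p (lt_of_lt_of_le (Finset.mem_Ico.1 hp).2 him)
      field_simp
    have cbs : (∑ p ∈ Finset.Ico m' i, h p * ((w (p+1) - w p)/h p))^2
        ≤ (∑ p ∈ Finset.Ico m' i, h p)
          * ∑ p ∈ Finset.Ico m' i, h p * ((w (p+1) - w p)/h p)^2 := by
      apply Finset.sum_sq_le_sum_mul_sum_of_sq_eq_mul
      · intro p hp; exact (hh p (lt_of_lt_of_le (Finset.mem_Ico.1 hp).2 him)).le
      · intro p hp
        exact mul_nonneg (hh p (lt_of_lt_of_le (Finset.mem_Ico.1 hp).2 him)).le (sq_nonneg _)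
      · intro p hp; ring
    have hsub : Finset.Ico m' i ⊆ Finset.Ico m' m :=
      Finset.Ico_subset_Ico le_rfl him
    have h1 : ∑ p ∈ Finset.Ico m' i, h p ≤ L := by
      rw [hL]
      exact Finset.sum_le_sum_of_subset_of_nonneg hsub
        (fun p hp _ => (hh p (Finset.mem_Ico.1 hp).2).le)
    have h2 : ∑ p ∈ Finset.Ico m' i, h p * ((w (p+1) - w p)/h p)^2 ≤ S := by
      rw [hS]
      exact Finset.sum_le_sum_of_subset_of_nonneg hsub
        (fun p hp _ => mul_nonneg (hh p (Finset.mem_Ico.1 hp).2).le (sq_nonneg _))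
    have hnn : 0 ≤ ∑ p ∈ Finset.Ico m' i, h p * ((w (p+1) - w p)/h p)^2 :=
      Finset.sum_nonneg fun p hp =>
        mul_nonneg (hh p (lt_of_lt_of_le (Finset.mem_Ico.1 hp).2 him)).le (sq_nonneg _)
    calc (w i - w m')^2
        = (∑ p ∈ Finset.Ico m' i, h p * ((w (p+1) - w p)/h p))^2 := by rw [← tel2]
      _ ≤ (∑ p ∈ Finset.Ico m' i, h p)
          * ∑ p ∈ Finset.Ico m' i, h p * ((w (p+1) - w p)/h p)^2 := cbs
      _ ≤ L * S := mul_le_mul h1 h2 hnn hLnn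
  -- Bound the correction sum
  have corr : ∑ i ∈ Finset.range m, h i * (wt i - w i)^2 ≤ L^2 * S := by
    have hvanish : ∑ i ∈ Finset.range m, h i * (wt i - w i)^2
        = ∑ i ∈ Finset.Ico (m'+1) m, h i * (wt i - w i)^2 := by
      symm
      apply Finset.sum_subset
      · intro x hx
        exact Finset.mem_range.2 (Finset.mem_Ico.1 hx).2
      · intro x hx hx'
        have : x ≤ m' := by
          by_contra hc
          push_neg at hc
          exact hx' (Finset.mem_Ico.2 ⟨hc, Finset.mem_range.1 hx⟩)
        rw [hwt x, if_pos this]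
        simp
    rw [hvanish]
    calc ∑ i ∈ Finset.Ico (m'+1) m, h i * (wt i - w i)^2
        ≤ ∑ i ∈ Finset.Ico (m'+1) m, h i * (L * S) := by
          apply Finset.sum_le_sum
          intro i hi
          obtain ⟨hi1, hi2⟩ := Finset.mem_Ico.1 hi
          have hwti : wt i = w m' := by rw [hwt i, if_neg (by omega)]
          have : (wt i - w i)^2 = (w i - w m')^2 := by rw [hwti]; ring
          rw [this]
          exact mul_le_mul_of_nonneg_left (key i (by omega) hi2.le) (hh i hi2).le
      _ = (∑ i ∈ Finset.Ico (m'+1) m, h i) * (L * S) := by rw [← Finset.sum_mul]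
      _ ≤ L * (L * S) := by
          apply mul_le_mul_of_nonneg_right _ (mul_nonneg hLnn hSnn)
          rw [hL]
          exact Finset.sum_le_sum_of_subset_of_nonneg
            (Finset.Ico_subset_Ico (by omega) le_rfl)
            (fun p hp _ => (hh p (Finset.mem_Ico.1 hp).2).le)
      _ = L^2 * S := by ring
  -- Pointwise algebraic inequality, summed
  have main : ∑ i ∈ Finset.range m,
        (τ * (h i * ((v i - wt i)/τ)^2) - h i * (wt i - w i)^2 / τ)
      ≤ ∑ i ∈ Finset.range m, 2*τ*(h i * ((v i - w i)/τ) * ((v i - wt i)/τ)) := by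
    apply Finset.sum_le_sum
    intro i hi
    have hhi := (hh i (Finset.mem_range.1 hi)).le
    have hid : τ * (h i * ((v i - wt i)/τ)^2) - h i * (wt i - w i)^2 / τ
        = 2*τ*(h i * ((v i - w i)/τ) * ((v i - wt i)/τ)) - h i * (v i - w i)^2 / τ := by
      field_simp
      ring
    have hpos : 0 ≤ h i * (v i - w i)^2 / τ :=
      div_nonneg (mul_nonneg hhi (sq_nonneg _)) hτ.le
    linarith
  rw [Finset.sum_sub_distrib, ← Finset.mul_sum, ← Finset.sum_div] at main
  rw [ge_iff_le, ← Finset.mul_sum] at *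
  have hc : (∑ i ∈ Finset.range m, h i * (wt i - w i)^2) / τ ≤ L^2 * S / τ :=
    div_le_div_of_nonneg_right corr hτ.le
  have : L^2 * S / τ = L^2/τ * S := by ring
  linarith
end

section
/- Let V be a set, and for each ρ>0 let V_ρ⊆V; let R>0 and ε₀∈(0,R), and assume V_{R−ε} is nonempty for each ε∈(0,ε₀). For each positive integer n let D_n be a set, V_R^n⊆D_n a nonempty subset, I_n:D_n→[0,∞), Q_n:V→D_n, and P_n:D_n→V; let J:V→[0,∞). Write J_*=inf_{V_R}J, J_*(ε)=inf_{V_{R+ε}}J, J_*(−ε)=inf_{V_{R−ε}}J, and I_{n*}=inf_{V_R^n}I_n. Assume: (1) for each ε∈(0,ε₀) there is N₁ such that Q_n(v)∈V_R^n for all v∈V_{R−ε} and n≥N₁, and for each ε∈(0,ε₀) and each v∈V_{R−ε}, limsup_{n→∞}(I_n(Q_n(v))−J(v)) ≤ 0; (2) for each ε∈(0,ε₀) there is N₂ such that P_n(d)∈V_{R+ε} for all d∈V_R^n and n≥N₂, and for every sequence d_n∈V_R^n, limsup_{n→∞}(J(P_n(d_n))−I_n(d_n)) ≤ 0; (3)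 limsup_{ε→0+}J_*(ε) ≥ J_* and liminf_{ε→0+}J_*(−ε) ≤ J_*. Then lim_{n→∞} I_{n*} = J_*. -/
open Filter Topology

/-- sufficiency part of Lemma 2.2, Vasil'ev's criterion: under conditions
(1), (2), (3), the discrete optimal values `I_{n*} = inf_{V_R^n} I_n` converge to
`J_* = inf_{V_R} J`.  The `limsup`/`liminf` conditions are stated in their ε-form. -/
theorem stmt_15 (V : Type*) (Vρ : ℝ → Set V) (R ε₀ : ℝ)
    (hR : 0 < R) (hε₀0 : 0 < ε₀) (hε₀R : ε₀ < R)
    (hVne : ∀ ε : ℝ, 0 < ε → ε < ε₀ → (Vρ (R - ε)).Nonempty)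
    (D : ℕ → Type*) (VRn : ∀ n : ℕ, Set (D n)) (hVRn : ∀ n, (VRn n).Nonempty)
    (I : ∀ n : ℕ, D n → ℝ) (hI : ∀ n d, 0 ≤ I n d)
    (Q : ∀ n : ℕ, V → D n) (P : ∀ n : ℕ, D n → V)
    (J : V → ℝ) (hJ : ∀ v, 0 ≤ J v)
    -- condition (1)
    (h1a : ∀ ε : ℝ, 0 < ε → ε < ε₀ → ∃ N₁ : ℕ, ∀ v ∈ Vρ (R - ε), ∀ n ≥ N₁, Q n v ∈ VRn n)
    (h1b : ∀ ε : ℝ, 0 < ε → ε < ε₀ → ∀ v ∈ Vρ (R - ε),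
      ∀ δ > (0:ℝ), ∀ᶠ n in atTop, I n (Q n v) - J v ≤ δ)
    -- condition (2)
    (h2a : ∀ ε : ℝ, 0 < ε → ε < ε₀ → ∃ N₂ : ℕ, ∀ n ≥ N₂, ∀ d ∈ VRn n, P n d ∈ Vρ (R + ε))
    (h2b : ∀ d : (∀ n : ℕ, D n), (∀ n, d n ∈ VRn n) →
      ∀ δ > (0:ℝ), ∀ᶠ n in atTop, J (P n (d n)) - I n (d n) ≤ δ)
    -- condition (3)
    (h3a : ∀ δ > (0:ℝ), ∃ᶠ ε in 𝓝[>] (0:ℝ),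
      sInf (J '' Vρ R) - δ ≤ sInf (J '' Vρ (R + ε)))
    (h3b : ∀ δ > (0:ℝ), ∃ᶠ ε in 𝓝[>] (0:ℝ),
      sInf (J '' Vρ (R - ε)) ≤ sInf (J '' Vρ R) + δ) :
    Tendsto (fun n => sInf (I n '' VRn n)) atTop (𝓝 (sInf (J '' Vρ R))) := by
  rw [Metric.tendsto_atTop]
  intro ε hε
  set δ := ε / 4 with hδdef
  have hδ : 0 < δ := by positivity
  have hfreq : ∀ᶠ e in 𝓝[>] (0:ℝ), 0 < e ∧ e < ε₀ := by
    filter_upwards [Ioo_mem_nhdsGT_of_mem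
      (Set.left_mem_Ico.2 hε₀0 : (0:ℝ) ∈ Set.Ico 0 ε₀)] with e he
    exact ⟨he.1, he.2⟩
  -- upper bound
  obtain ⟨e1, h3b1, he1pos, he1lt⟩ := ((h3b δ hδ).and_eventually hfreq).exists
  obtain ⟨y, ⟨v, hv, rfl⟩, hy⟩ :=
    Real.lt_sInf_add_pos ((hVne e1 he1pos he1lt).image J) hδ
  obtain ⟨N₁, hN₁⟩ := h1a e1 he1pos he1lt
  have hub : ∀ᶠ n in atTop, sInf (I n '' VRn n) ≤ sInf (J '' Vρ R) + 3 * δ := by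
    filter_upwards [h1b e1 he1pos he1lt v hv δ hδ, eventually_ge_atTop N₁] with n hn hnN
    have hmem : Q n v ∈ VRn n := hN₁ v hv n hnN
    have hbdd : BddBelow (I n '' VRn n) := ⟨0, by rintro x ⟨d, hd, rfl⟩; exact hI n d⟩
    have h1 := csInf_le hbdd ⟨Q n v, hmem, rfl⟩
    linarith
  -- lower bound
  obtain ⟨e2, h3a2, he2pos, he2lt⟩ := ((h3a δ hδ).and_eventually hfreq).exists
  obtain ⟨N₂, hN₂⟩ := h2a e2 he2pos he2lt
  have hd : ∀ n, ∃ x ∈ VRn n, I n x < sInf (I n '' VRn n) + δ := by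
    intro n
    obtain ⟨y, ⟨x, hx, rfl⟩, hy⟩ := Real.lt_sInf_add_pos ((hVRn n).image (I n)) hδ
    exact ⟨x, hx, hy⟩
  choose d hdmem hdlt using hd
  have hlb : ∀ᶠ n in atTop, sInf (J '' Vρ R) - 3 * δ ≤ sInf (I n '' VRn n) := by
    filter_upwards [h2b d hdmem δ hδ, eventually_ge_atTop N₂] with n hn hnN
    have hmem : P n (d n) ∈ Vρ (R + e2) := hN₂ n hnN (d n) (hdmem n)
    have hbdd : BddBelow (J '' Vρ (R + e2)) := ⟨0, by rintro x ⟨w, hw, rfl⟩; exact hJ w⟩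
    have h1 := csInf_le hbdd ⟨P n (d n), hmem, rfl⟩
    linarith [hdlt n]
  obtain ⟨N, hN⟩ := eventually_atTop.1 (hub.and hlb)
  refine ⟨N, fun n hn => ?_⟩
  have h := hN n hn
  rw [Real.dist_eq, abs_sub_lt_iff]
  constructor
  · linarith [h.1]
  · linarith [h.2]
end

section
/- Let T>0, n≥1 an integer, τ=T/n, t_k=kτ. Let s:[0,T]→ℝ be absolutely continuous with square-integrable derivative s', and let σ₁,…,σₙ∈ℝ. Define Δ = ⋃_{k=1}^{n} {(x,t)∈ℝ² : t_{k-1}<t<t_k, min(s(t),σ_k)<x<max(s(t),σ_k)}. Then the two-dimensional Lebesgue measure of Δ satisfies |Δ| ≤ √T·(∫₀ᵀ s'(t)² dt)^{1/2}·τ + T·max_{1≤k≤n}|s(t_k)−σ_k|. -/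
/-!
On the `k`-th strip `t_{k-1} < t < t_k`, the section of `Δ` at time `t` is an interval
of length `|s t - σ_k| ≤ |s t_k - σ_k| + ∫_{t_{k-1}}^{t_k} |s'|`, and by Cauchy–Schwarz the last
integral is at most `√τ ‖s'‖_{L²(t_{k-1}, t_k)}`. Fubini bounds the measure of the strip by `τ`
times this, and summing over `k` with the discrete Cauchy–Schwarz inequality
`∑ₖ ‖s'‖_{L²(t_{k-1}, t_k)} ≤ √n ‖s'‖_{L²(0, T)}` and `nτ = T` gives the estimate.
-/

open MeasureTheory Filter Set

theorem integral_abs_le_sqrt_measureReal_univ_mul_sqrt_integral_sq {α : Type*}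
    [MeasurableSpace α] {μ : Measure α} [IsFiniteMeasure μ] {f : α → ℝ} (hf : MemLp f 2 μ) :
    ∫ x, |f x| ∂μ ≤ √(μ.real univ) * √(∫ x, f x ^ 2 ∂μ) := by
  have H := integral_mul_le_Lp_mul_Lq_of_nonneg Real.HolderConjugate.two_two
    (Eventually.of_forall fun x => abs_nonneg (f x)) (Eventually.of_forall fun _ => zero_le_one)
    (by rw [ENNReal.ofReal_ofNat]; exact hf.abs) (memLp_const (1 : ℝ))
  simp only [mul_one, Real.one_rpow, integral_const, smul_eq_mul] at H
  simpa [Real.sqrt_eq_rpow, mul_comm] using H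

theorem intervalIntegral.integral_abs_le_sqrt_mul_sqrt_integral_sq {f : ℝ → ℝ} {a b : ℝ}
    (hab : a ≤ b) (hf : IntervalIntegrable f volume a b)
    (hf2 : IntervalIntegrable (fun t => f t ^ 2) volume a b) :
    ∫ t in a..b, |f t| ≤ √(b - a) * √(∫ t in a..b, f t ^ 2) := by
  have hL2 : MemLp f 2 (volume.restrict (Ioc a b)) :=
    (memLp_two_iff_integrable_sq hf.1.aestronglyMeasurable).2 hf2.1
  simpa [intervalIntegral.integral_of_le hab, hab] using
    integral_abs_le_sqrt_measureReal_univ_mul_sqrt_integral_sq hL2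

section

variable {s s' : ℝ → ℝ} {a b : ℝ}

theorem continuousOn_of_sub_eq_integral_s17 (hs' : IntervalIntegrable s' volume a b)
    (hs : ∀ x ∈ Icc a b, s b - s x = ∫ t in x..b, s' t) : ContinuousOn s (Icc a b) := by
  have hprim : ContinuousOn (fun x => s b + ∫ t in b..x, s' t) (Icc a b) :=
    (continuousOn_const.add
      (intervalIntegral.continuousOn_primitive_interval' hs' right_mem_uIcc)).mono Icc_subset_uIcc
  refine hprim.congr fun x hx => ?_
  dsimp only
  rw [intervalIntegral.integral_symm x b, ← hs x hx]
  ring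

theorem abs_sub_le_abs_sub_add_integral_abs (hs' : IntervalIntegrable s' volume a b)
    (hs : ∀ x ∈ Icc a b, s b - s x = ∫ t in x..b, s' t) (c : ℝ) {x : ℝ} (hx : x ∈ Icc a b) :
    |s x - c| ≤ |s b - c| + ∫ t in a..b, |s' t| :=
  calc |s x - c| = |(s b - c) - (s b - s x)| := by ring_nf
    _ ≤ |s b - c| + |∫ t in x..b, s' t| := by rw [hs x hx]; exact abs_sub _ _
    _ ≤ |s b - c| + ∫ t in a..b, |s' t| := by
      gcongr
      exact (intervalIntegral.abs_integral_le_integral_abs hx.2).trans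
        (intervalIntegral.integral_mono_interval hx.1 hx.2 le_rfl
          (Eventually.of_forall fun _ => abs_nonneg _) hs'.abs)

end

theorem volume_setOf_between_graph_and_const {f : ℝ → ℝ} {a b : ℝ} (hab : a ≤ b)
    (hf : ContinuousOn f (Icc a b)) (c : ℝ) :
    volume {p : ℝ × ℝ | a < p.2 ∧ p.2 < b ∧ min (f p.2) c < p.1 ∧ p.1 < max (f p.2) c}
      = ENNReal.ofReal (∫ t in a..b, |f t - c|) := by
  have hswap : {p : ℝ × ℝ | a < p.2 ∧ p.2 < b ∧ min (f p.2) c < p.1 ∧ p.1 < max (f p.2) c}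
      = Prod.swap ⁻¹'
          regionBetween (fun t => min (f t) c) (fun t => max (f t) c) (Ioo a b) := by
    ext p
    simp [regionBetween, and_assoc]
  have hint : ∀ g : ℝ → ℝ, ContinuousOn g (Icc a b) → IntegrableOn g (Ioo a b) := fun g hg =>
    hg.integrableOn_Icc.mono_set Ioo_subset_Icc_self
  rw [hswap, Measure.volume_eq_prod]
  refine (Measure.measurePreserving_swap.measure_preimage_equiv
    (f := MeasurableEquiv.prodComm) _).trans ?_
  rw [volume_regionBetween_eq_integral (hint _ (hf.inf continuousOn_const))
      (hint _ (hf.sup continuousOn_const)) measurableSet_Ioo fun _ _ => min_le_max,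
    intervalIntegral.integral_of_le hab, integral_Ioc_eq_integral_Ioo]
  simp [max_sub_min_eq_abs']

theorem volume_setOf_between_graph_and_const_le {s s' : ℝ → ℝ} {a b : ℝ} (hab : a ≤ b)
    (hs' : IntervalIntegrable s' volume a b)
    (hs'2 : IntervalIntegrable (fun t => s' t ^ 2) volume a b)
    (hs : ∀ x ∈ Icc a b, s b - s x = ∫ t in x..b, s' t) (c : ℝ) :
    volume {p : ℝ × ℝ | a < p.2 ∧ p.2 < b ∧ min (s p.2) c < p.1 ∧ p.1 < max (s p.2) c}
      ≤ ENNReal.ofReal ((b - a) * (|s b - c| + √(b - a) * √(∫ t in a..b, s' t ^ 2))) := by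
  have hcont := continuousOn_of_sub_eq_integral_s17 hs' hs
  rw [volume_setOf_between_graph_and_const hab hcont c]
  gcongr
  calc ∫ t in a..b, |s t - c| ≤ ∫ _ in a..b, (|s b - c| + ∫ t in a..b, |s' t|) :=
        intervalIntegral.integral_mono_on hab
          ((hcont.sub continuousOn_const).abs.intervalIntegrable_of_Icc hab)
          intervalIntegrable_const fun x hx => abs_sub_le_abs_sub_add_integral_abs hs' hs c hx
    _ = (b - a) * (|s b - c| + ∫ t in a..b, |s' t|) := by
      rw [intervalIntegral.integral_const, smul_eq_mul]
    _ ≤ (b - a) * (|s b - c| + √(b - a) * √(∫ t in a..b, s' t ^ 2)) := by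
      gcongr
      exact intervalIntegral.integral_abs_le_sqrt_mul_sqrt_integral_sq hab hs' hs'2

theorem volume_setOf_between_graph_and_const_le_of_grid {T τ : ℝ} (hτ : 0 ≤ τ) {k : ℕ}
    (hk : 1 ≤ k) (hkT : k * τ ≤ T) {s s' : ℝ → ℝ} (hs' : IntervalIntegrable s' volume 0 T)
    (hs'2 : IntervalIntegrable (fun t => s' t ^ 2) volume 0 T)
    (hs : ∀ a b : ℝ, 0 ≤ a → a ≤ b → b ≤ T → s b - s a = ∫ t in a..b, s' t) (c : ℝ) :
    volume {p : ℝ × ℝ | ((k : ℝ) - 1) * τ < p.2 ∧ p.2 < k * τ ∧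
        min (s p.2) c < p.1 ∧ p.1 < max (s p.2) c}
      ≤ ENNReal.ofReal
          (τ * (|s (k * τ) - c| + √τ * √(∫ t in ((k : ℝ) - 1) * τ..k * τ, s' t ^ 2))) := by
  have hk' : (1 : ℝ) ≤ k := by exact_mod_cast hk
  have ha : 0 ≤ ((k : ℝ) - 1) * τ := by nlinarith
  have hab : ((k : ℝ) - 1) * τ ≤ k * τ := by nlinarith
  have hsub : uIcc (((k : ℝ) - 1) * τ) (k * τ) ⊆ uIcc 0 T := by
    rw [uIcc_of_le hab, uIcc_of_le (ha.trans (hab.trans hkT))]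
    exact Icc_subset_Icc ha hkT
  have hlen : (k : ℝ) * τ - ((k : ℝ) - 1) * τ = τ := by ring
  simpa only [hlen] using volume_setOf_between_graph_and_const_le hab (hs'.mono_set hsub)
    (hs'2.mono_set hsub) (fun x hx => hs x _ (ha.trans hx.1) hx.2 hkT) c

theorem intervalIntegral.sum_Icc_integral_eq_integral {E : Type*} [NormedAddCommGroup E]
    [NormedSpace ℝ E] {f : ℝ → E} {τ : ℝ} (hτ : 0 ≤ τ) {n : ℕ}
    (hf : IntervalIntegrable f volume 0 (n * τ)) :
    ∑ k ∈ Finset.Icc 1 n, ∫ x in ((k : ℝ) - 1) * τ..k * τ, f x = ∫ x in 0..n * τ, f x := by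
  have hpieces : ∀ k < n, IntervalIntegrable f volume (k * τ) ((k + 1 : ℕ) * τ) := by
    intro k hk
    have hk' : ((k + 1 : ℕ) : ℝ) ≤ n := by exact_mod_cast hk
    refine hf.mono_set ?_
    rw [uIcc_of_le (by gcongr; simp), uIcc_of_le (by positivity)]
    exact Icc_subset_Icc (by positivity) (by gcongr)
  rw [← Finset.Ico_add_one_right_eq_Icc, Finset.sum_Ico_eq_sum_range]
  simpa [add_comm] using intervalIntegral.sum_integral_adjacent_intervals hpieces

theorem Real.sum_sqrt_le_sqrt_card_mul_sqrt_sum {ι : Type*} (s : Finset ι) {g : ι → ℝ}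
    (hg : ∀ i, 0 ≤ g i) : ∑ i ∈ s, √(g i) ≤ √(s.card) * √(∑ i ∈ s, g i) := by
  simpa using Real.sum_sqrt_mul_sqrt_le s (fun _ => zero_le_one) hg

theorem Real.sum_mul_add_sqrt_mul_sqrt_le {ι : Type*} (s : Finset ι) {τ : ℝ} (hτ : 0 ≤ τ)
    (M : ℝ) {I : ι → ℝ} (hI : ∀ i, 0 ≤ I i) :
    ∑ i ∈ s, τ * (M + √τ * √(I i)) ≤ √(s.card * τ) * √(∑ i ∈ s, I i) * τ + s.card * τ * M := by
  calc ∑ i ∈ s, τ * (M + √τ * √(I i)) = s.card * τ * M + τ * √τ * ∑ i ∈ s, √(I i) := by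
        rw [← Finset.mul_sum, Finset.sum_add_distrib, ← Finset.mul_sum, Finset.sum_const,
          nsmul_eq_mul]
        ring
    _ ≤ s.card * τ * M + τ * √τ * (√(s.card) * √(∑ i ∈ s, I i)) := by
        gcongr
        exact Real.sum_sqrt_le_sqrt_card_mul_sqrt_sum s hI
    _ = √(s.card * τ) * √(∑ i ∈ s, I i) * τ + s.card * τ * M := by
        rw [Real.sqrt_mul (Nat.cast_nonneg _)]
        ring

/-- the measure estimate for the region `Δ` between the curve `x = s(t)` and
the piecewise constant levels `x = σ_k` over the uniform time partition. -/
theorem stmt_17 (T : ℝ) (hT : 0 < T) (n : ℕ) (hn : 1 ≤ n) (τ : ℝ) (hτ : τ = T / n)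
    (s s' : ℝ → ℝ)
    (hs'int : IntervalIntegrable s' volume 0 T)
    (hs'sq : IntervalIntegrable (fun t => (s' t)^2) volume 0 T)
    (hftc : ∀ a b : ℝ, 0 ≤ a → a ≤ b → b ≤ T → s b - s a = ∫ t in a..b, s' t)
    (σ : ℕ → ℝ) :
    volume (⋃ k ∈ Finset.Icc 1 n,
        {p : ℝ × ℝ | ((k:ℝ)-1)*τ < p.2 ∧ p.2 < (k:ℝ)*τ ∧
          min (s p.2) (σ k) < p.1 ∧ p.1 < max (s p.2) (σ k)})
      ≤ ENNReal.ofReal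
          (Real.sqrt T * Real.sqrt (∫ t in (0:ℝ)..T, (s' t)^2) * τ
            + T * (Finset.Icc 1 n).sup' (Finset.nonempty_Icc.mpr hn)
                (fun k => |s ((k:ℝ)*τ) - σ k|)) := by
  have hτ0 : 0 < τ := by rw [hτ]; positivity
  have hnτ : n * τ = T := by rw [hτ]; field_simp
  set M := (Finset.Icc 1 n).sup' (Finset.nonempty_Icc.mpr hn) fun k : ℕ => |s (k * τ) - σ k|
  have hM0 : 0 ≤ M := (abs_nonneg _).trans
    (Finset.le_sup' (fun k : ℕ => |s (k * τ) - σ k|) (Finset.right_mem_Icc.mpr hn))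
  set I : ℕ → ℝ := fun k => ∫ t in ((k : ℝ) - 1) * τ..k * τ, s' t ^ 2
  have hpiece : ∀ k ∈ Finset.Icc 1 n,
      volume {p : ℝ × ℝ | ((k : ℝ) - 1) * τ < p.2 ∧ p.2 < k * τ ∧
          min (s p.2) (σ k) < p.1 ∧ p.1 < max (s p.2) (σ k)}
        ≤ ENNReal.ofReal (τ * (M + √τ * √(I k))) := by
    intro k hk
    obtain ⟨hk1, hkn⟩ := Finset.mem_Icc.mp hk
    have hkT : (k : ℝ) * τ ≤ T := by rw [← hnτ]; gcongr
    refine (volume_setOf_between_graph_and_const_le_of_grid hτ0.le hk1 hkT hs'int hs'sq hftc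
      (σ k)).trans ?_
    gcongr
    exact Finset.le_sup' (fun k : ℕ => |s (k * τ) - σ k|) hk
  have hI : ∑ k ∈ Finset.Icc 1 n, I k = ∫ t in (0 : ℝ)..T, s' t ^ 2 := by
    rw [← hnτ] at hs'sq ⊢
    exact intervalIntegral.sum_Icc_integral_eq_integral hτ0.le hs'sq
  have hI0 : ∀ k, 0 ≤ I k := fun k =>
    intervalIntegral.integral_nonneg (by linarith) fun _ _ => sq_nonneg _
  calc _ ≤ ∑ k ∈ Finset.Icc 1 n, ENNReal.ofReal (τ * (M + √τ * √(I k))) :=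
        (measure_biUnion_finset_le _ _).trans (Finset.sum_le_sum hpiece)
    _ = ENNReal.ofReal (∑ k ∈ Finset.Icc 1 n, τ * (M + √τ * √(I k))) :=
        (ENNReal.ofReal_sum_of_nonneg fun k _ => by positivity).symm
    _ ≤ _ := by
        gcongr
        simpa [hnτ, hI] using Real.sum_mul_add_sqrt_mul_sqrt_le (Finset.Icc 1 n) hτ0.le M hI0
end
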